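/- arXiv:1912.04866 — 8 statements merged into one kernel-verified Lean document; each statement's English description precedes it below -/
import Mathlib

section
/- Let K be a field of characteristic zero, R = K[x,y,z], and let a, b, c, α, β, γ be integers with 1 ≤ α ≤ a−1, 1 ≤ β ≤ b−1, 1 ≤ γ ≤ c−1 and α + γ = b. Let I = (x^a, y^b − x^α z^γ, z^c, x^{a−α} y^{b−β}, y^{b−β} z^{c−γ}) ⊆ R. If at least one of the integers a, b, c is equal to 2, then R/I has the weak Lefschetz property. -/
open MvPolynomial

/-- The degree-`i` graded component of `R/I`, i.e. the image in `R/I` of the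
space of homogeneous polynomials of degree `i`. -/
noncomputable def grComponent (K : Type*) [Field K]
    (I : Ideal (MvPolynomial (Fin 3) K)) (i : ℕ) :
    Submodule K (MvPolynomial (Fin 3) K ⧸ I) :=
  (MvPolynomial.homogeneousSubmodule (Fin 3) K i).map
    (Ideal.Quotient.mkₐ K I).toLinearMap

/-- The Hilbert function of `R/I`. -/
noncomputable def hilb (K : Type*) [Field K]
    (I : Ideal (MvPolynomial (Fin 3) K)) (i : ℕ) : ℕ :=
  Module.finrank K (grComponent K I i)

/-- `R/I` has the weak Lefschetz property: there is a linear form `L` such that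
for every `i`, multiplication by `L` from `[R/I]_i` to `[R/I]_{i+1}` is
injective or surjective. -/
def hasWLP (K : Type*) [Field K] (I : Ideal (MvPolynomial (Fin 3) K)) : Prop :=
  ∃ L : MvPolynomial (Fin 3) K, L.IsHomogeneous 1 ∧
    ∀ i : ℕ,
      (∀ u ∈ grComponent K I i, ∀ v ∈ grComponent K I i,
          Ideal.Quotient.mk I L * u = Ideal.Quotient.mk I L * v → u = v) ∨
      (∀ w ∈ grComponent K I (i + 1), ∃ u ∈ grComponent K I i,
          Ideal.Quotient.mk I L * u = w)

/-!
Using the symmetry `x ↔ z`, which exchanges `(a, α)` with `(c, γ)`, we may assume `a = 2`, or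
`b = 2` and `a ≤ c`. Then `I = (x^2, y^b - x z^(b-1), z^c, x y^t, y^t z^(c-b+1))` with `t = b - β`
and `L = y + z`, resp. `I = (x^a, y^2 - x z, z^c, x^(a-1) y, y z^(c-1))` and `L = x + z`.

Surjectivity in high degrees: modulo `I + L R_n`, `m y ≡ -m z` (resp. `m x ≡ -m z`), and these
moves bring every monomial of degree `n + 1` into the monomial part of `I`.

Injectivity in low degrees: reducing by the binomial and dropping the non-standard monomials is a
linear normal form `φ` for `I`, and `L f ∈ I` forces `φ (L g) = 0` for `g = φ f`. For `b = 2` and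
`deg g + 2 ≤ a`, `L g` is again standard, so `L g = 0`. For `a = 2` and `deg g + β < c`, the only
corrections are `y^b ↦ x z^(b-1)` and `x y^t ↦ 0`, so `L g` is a `K[z]`-combination of
`y^b - x z^(b-1)` and `x y^t`; substituting `y = -z` and then `x = 0` shows it vanishes.
-/

namespace WLP

section General

variable {σ K : Type*} [Field K]

lemma monomial_eq_smul_monomial_one (v : σ →₀ ℕ) (c : K) :
    monomial v c = c • monomial v (1 : K) := by
  rw [smul_monomial, smul_eq_mul, mul_one]

lemma map_mem_of_support_subset {M : Type*} [AddCommGroup M] [Module K M]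
    (Ψ : MvPolynomial σ K →ₗ[K] M) {N : Submodule K M} {T : Set (σ →₀ ℕ)}
    (hT : ∀ v ∈ T, Ψ (monomial v 1) ∈ N) {g : MvPolynomial σ K} (hg : ↑g.support ⊆ T) :
    Ψ g ∈ N := by
  rw [g.as_sum, map_sum]
  refine N.sum_mem fun v hv => ?_
  rw [monomial_eq_smul_monomial_one, map_smul]
  exact N.smul_mem _ (hT v (hg hv))

lemma support_subset_of_isHomogeneous {f : MvPolynomial σ K} {d : ℕ} (hf : f.IsHomogeneous d) :
    ↑f.support ⊆ {v : σ →₀ ℕ | v.degree = d} := fun v hv => by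
  show v.degree = d
  rw [Finsupp.degree_eq_weight_one]
  exact hf (mem_support_iff.mp hv)

lemma monomial_mem_of_le {I : Ideal (MvPolynomial σ K)} {u v : σ →₀ ℕ} (huv : u ≤ v)
    (hu : monomial u (1 : K) ∈ I) : monomial v (1 : K) ∈ I := by
  simpa [monomial_mul, tsub_add_cancel_of_le huv] using I.mul_mem_left (monomial (v - u) 1) hu

lemma homogeneousSubmodule_le_of_monomial_mem {N : Submodule K (MvPolynomial σ K)} {d : ℕ}
    (h : ∀ v : σ →₀ ℕ, v.degree = d → monomial v 1 ∈ N) : homogeneousSubmodule σ K d ≤ N :=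
  fun _ hf => map_mem_of_support_subset LinearMap.id h (support_subset_of_isHomogeneous hf)

lemma X_add_X_mul_monomial (p q : σ) (u : σ →₀ ℕ) (c : K) :
    (X p + X q) * monomial u c =
      monomial (u + Finsupp.single p 1) c + monomial (u + Finsupp.single q 1) c := by
  simp [add_mul, X, monomial_mul, add_comm]

lemma X_add_X_ne_zero {p q : σ} (hpq : p ≠ q) : (X p + X q : MvPolynomial σ K) ≠ 0 := fun h => by
  classical
  simpa [Pi.single_apply, hpq.symm] using congrArg (eval (Pi.single p 1)) h

/-- `I + L ⬝ R_n`: the forms of degree `n + 1` in it are those whose class lies in the image of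
`×L : [R/I]_n → [R/I]_{n+1}`. -/
noncomputable def idealSupMul (I : Ideal (MvPolynomial σ K)) (L : MvPolynomial σ K) (n : ℕ) :
    Submodule K (MvPolynomial σ K) :=
  I.restrictScalars K ⊔ (homogeneousSubmodule σ K n).map (LinearMap.mulLeft K L)

lemma mem_idealSupMul_of_mem {I : Ideal (MvPolynomial σ K)} {L p : MvPolynomial σ K} {n : ℕ}
    (hp : p ∈ I) : p ∈ idealSupMul I L n :=
  Submodule.mem_sup_left hp

lemma mul_mem_idealSupMul (I : Ideal (MvPolynomial σ K)) (L : MvPolynomial σ K) {n : ℕ}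
    {q : MvPolynomial σ K} (hq : q.IsHomogeneous n) : L * q ∈ idealSupMul I L n :=
  Submodule.mem_sup_right (Submodule.mem_map_of_mem hq)

lemma monomial_add_single_mem_idealSupMul_iff {I : Ideal (MvPolynomial σ K)} {p q : σ}
    {u : σ →₀ ℕ} {m n : ℕ} (hu : u.degree + m = n + 1) :
    monomial (u + Finsupp.single p m) 1 ∈ idealSupMul I (X p + X q) n ↔
      monomial (u + Finsupp.single q m) 1 ∈ idealSupMul I (X p + X q) n := by
  induction m generalizing u with
  | zero => simp
  | succ m ih =>
    set S := idealSupMul I (X p + X q) n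
    have hw : (u + Finsupp.single p m).degree = n := by simp at hu ⊢; omega
    have hsum := mul_mem_idealSupMul I (X p + X q) (isHomogeneous_monomial (1 : K) hw)
    rw [X_add_X_mul_monomial] at hsum
    have hu' : (u + Finsupp.single q 1).degree + m = n + 1 := by simp at hu ⊢; omega
    calc monomial (u + Finsupp.single p (m + 1)) 1 ∈ S
        ↔ monomial (u + Finsupp.single p m + Finsupp.single q 1) 1 ∈ S := by
          rw [Finsupp.single_add, ← add_assoc]
          exact ⟨fun h => by simpa using sub_mem hsum h, fun h => by simpa using sub_mem hsum h⟩
      _ ↔ monomial (u + Finsupp.single q (m + 1)) 1 ∈ S := by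
          rw [add_right_comm, ih hu', add_assoc, ← Finsupp.single_add, add_comm 1 m]

end General

section Lefschetz

variable {K : Type*} [Field K]

lemma mem_grComponent {I : Ideal (MvPolynomial (Fin 3) K)} {n : ℕ}
    {u : MvPolynomial (Fin 3) K ⧸ I} :
    u ∈ grComponent K I n ↔
      ∃ f : MvPolynomial (Fin 3) K, f.IsHomogeneous n ∧ Ideal.Quotient.mk I f = u := by
  simp [grComponent]

theorem hasWLP_iff {I : Ideal (MvPolynomial (Fin 3) K)} :
    hasWLP K I ↔ ∃ L : MvPolynomial (Fin 3) K, L.IsHomogeneous 1 ∧ ∀ n : ℕ,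
      (∀ f : MvPolynomial (Fin 3) K, f.IsHomogeneous n → L * f ∈ I → f ∈ I) ∨
        homogeneousSubmodule (Fin 3) K (n + 1) ≤ idealSupMul I L n := by
  refine exists_congr fun L => and_congr_right fun _ => forall_congr' fun n => or_congr ?_ ?_
  · constructor
    · intro h f hf hLf
      rw [← Ideal.Quotient.eq_zero_iff_mem] at hLf ⊢
      exact h _ (mem_grComponent.2 ⟨f, hf, rfl⟩) 0 (zero_mem _) (by simpa using hLf)
    · rintro h _ hu _ hv huv
      obtain ⟨f, hf, rfl⟩ := mem_grComponent.1 hu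
      obtain ⟨g, hg, rfl⟩ := mem_grComponent.1 hv
      rw [← map_mul, ← map_mul, Ideal.Quotient.eq, ← mul_sub] at huv
      exact Ideal.Quotient.eq.2 (h _ (hf.sub hg) huv)
  · constructor
    · rintro h f hf
      obtain ⟨_, hu, hLu⟩ := h _ (mem_grComponent.2 ⟨f, hf, rfl⟩)
      obtain ⟨q, hq, rfl⟩ := mem_grComponent.1 hu
      rw [← map_mul, Ideal.Quotient.eq] at hLu
      exact Submodule.mem_sup.2
        ⟨f - L * q, by simpa using I.neg_mem hLu, L * q, Submodule.mem_map_of_mem hq, by ring⟩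
    · rintro h _ hw
      obtain ⟨f, hf, rfl⟩ := mem_grComponent.1 hw
      obtain ⟨i, hi, _, ⟨q, hq, rfl⟩, rfl⟩ := Submodule.mem_sup.1 (h hf)
      refine ⟨_, mem_grComponent.2 ⟨q, hq, rfl⟩, ?_⟩
      simp [← map_mul, Ideal.Quotient.eq_zero_iff_mem.2 hi]

theorem hasWLP_map_renameEquiv (e : Fin 3 ≃ Fin 3) {I : Ideal (MvPolynomial (Fin 3) K)}
    (h : hasWLP K I) : hasWLP K (I.map (renameEquiv K e)) := by
  rw [hasWLP_iff] at h ⊢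
  obtain ⟨L, hL, hLn⟩ := h
  set ρ := renameEquiv K e
  have hmem : ∀ p, p ∈ I.map ρ ↔ ρ.symm p ∈ I := fun p => by
    rw [Ideal.mem_map_of_equiv]
    exact ⟨by rintro ⟨x, hx, rfl⟩; simpa using hx, fun hp => ⟨_, hp, by simp⟩⟩
  have hhom : ∀ {f : MvPolynomial (Fin 3) K} {n : ℕ}, f.IsHomogeneous n →
      (ρ f).IsHomogeneous n ∧ (ρ.symm f).IsHomogeneous n := fun hf =>
    ⟨hf.rename_isHomogeneous, hf.rename_isHomogeneous⟩
  refine ⟨ρ L, (hhom hL).1, fun n => (hLn n).imp (fun hinj f hf hLf => ?_) (fun hsurj f hf => ?_)⟩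
  · rw [hmem, map_mul, AlgEquiv.symm_apply_apply] at hLf
    exact (hmem f).2 (hinj _ (hhom hf).2 hLf)
  · obtain ⟨i, hi, _, ⟨q, hq, rfl⟩, hiq⟩ := Submodule.mem_sup.1 (hsurj (hhom hf).2)
    refine Submodule.mem_sup.2 ⟨ρ i, (hmem _).2 (by simpa using hi), ρ L * ρ q,
      Submodule.mem_map_of_mem (hhom hq).1, ?_⟩
    rw [← map_mul, ← map_add]
    simpa using congrArg ρ hiq

end Lefschetz

section NormalForm

variable {σ K : Type*} [Field K]

structure IsNormalForm (I : Ideal (MvPolynomial σ K))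
    (φ : MvPolynomial σ K →ₗ[K] MvPolynomial σ K) : Prop where
  sub_mem : ∀ p, p - φ p ∈ I
  map_eq_zero : ∀ p ∈ I, φ p = 0

lemma IsNormalForm.mem_of_mul_mem {I : Ideal (MvPolynomial σ K)}
    {φ : MvPolynomial σ K →ₗ[K] MvPolynomial σ K} (hφ : IsNormalForm I φ) {L f : MvPolynomial σ K}
    (hL : φ (L * φ f) = 0 → φ f = 0) (hLf : L * f ∈ I) : f ∈ I := by
  have hLφ : φ (L * φ f) = 0 := by
    rw [show L * φ f = L * f - L * (f - φ f) by ring, map_sub, hφ.map_eq_zero _ hLf,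
      hφ.map_eq_zero _ (I.mul_mem_left L (hφ.sub_mem f)), sub_zero]
  simpa [hL hLφ] using hφ.sub_mem f

variable (std : Set (σ →₀ ℕ)) (red : (σ →₀ ℕ) → σ →₀ ℕ)

noncomputable def normalFormMap : MvPolynomial σ K →ₗ[K] MvPolynomial σ K :=
  (basisMonomials σ K).constr K fun v => std.indicator (fun w => monomial w 1) (red v)

variable {std red}

lemma normalFormMap_monomial (v : σ →₀ ℕ) (c : K) :
    normalFormMap std red (monomial v c) = c • std.indicator (fun w => monomial w 1) (red v) := by
  have hv : monomial v (1 : K) = basisMonomials σ K v := by rw [coe_basisMonomials]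
  rw [monomial_eq_smul_monomial_one, map_smul, hv, normalFormMap, Module.Basis.constr_basis]

lemma normalFormMap_monomial_of_mem {v : σ →₀ ℕ} (h : red v ∈ std) (c : K) :
    normalFormMap std red (monomial v c) = monomial (red v) c := by
  rw [normalFormMap_monomial, Set.indicator_of_mem h, smul_monomial, smul_eq_mul, mul_one]

lemma normalFormMap_monomial_of_notMem {v : σ →₀ ℕ} (h : red v ∉ std) (c : K) :
    normalFormMap std red (monomial v c) = 0 := by
  rw [normalFormMap_monomial, Set.indicator_of_notMem h, smul_zero]

lemma normalFormMap_monomial_of_fixed {v : σ →₀ ℕ} (hred : red v = v) (hv : v ∈ std) (c : K) :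
    normalFormMap std red (monomial v c) = monomial v c := by
  rw [normalFormMap_monomial_of_mem (by rwa [hred]), hred]

lemma normalFormMap_monomial_congr {v w : σ →₀ ℕ} (h : red v = red w) (c : K) :
    normalFormMap std red (monomial v c) = normalFormMap std red (monomial w c) := by
  rw [normalFormMap_monomial, normalFormMap_monomial, h]

lemma isNormalForm_normalFormMap {S : Set (MvPolynomial σ K)}
    (hred : ∀ v, monomial v 1 - monomial (red v) 1 ∈ Ideal.span S)
    (hstd : ∀ v, red v ∉ std → monomial (red v) 1 ∈ Ideal.span S)
    (hS : ∀ g ∈ S, ∀ v, normalFormMap std red (monomial v 1 * g) = 0) :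
    IsNormalForm (Ideal.span S) (normalFormMap std red) where
  sub_mem p := by
    induction p using MvPolynomial.induction_on' with
    | monomial v c =>
      rw [monomial_eq_smul_monomial_one, map_smul, ← smul_sub]
      refine Submodule.smul_of_tower_mem _ c ?_
      by_cases hv : red v ∈ std
      · simpa [normalFormMap_monomial_of_mem hv] using hred v
      · simpa [normalFormMap_monomial_of_notMem hv] using add_mem (hred v) (hstd v hv)
    | add p q hp hq => simpa [add_sub_add_comm] using add_mem hp hq
  map_eq_zero p hp := by
    suffices ∀ r, normalFormMap std red (r * p) = 0 by simpa using this 1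
    induction hp using Submodule.span_induction with
    | mem g hg =>
      intro r
      induction r using MvPolynomial.induction_on' with
      | monomial v c =>
        rw [monomial_eq_smul_monomial_one, smul_mul_assoc, map_smul, hS g hg v, smul_zero]
      | add r r' hr hr' => rw [add_mul, map_add, hr, hr', add_zero]
    | zero => simp
    | add x y _ _ hx hy => simp [mul_add, hx, hy]
    | smul a x _ hx => simp [← mul_assoc, hx]

lemma support_normalFormMap_subset (hdeg : ∀ v, (red v).degree = v.degree)
    {f : MvPolynomial σ K} {d : ℕ} (hf : f.IsHomogeneous d) :
    ↑(normalFormMap std red f).support ⊆ {v | v ∈ std ∧ v.degree = d} := by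
  refine map_mem_of_support_subset (N := restrictSupport K _) _ (fun v hv => ?_)
    (support_subset_of_isHomogeneous hf)
  by_cases h : red v ∈ std
  · rw [normalFormMap_monomial_of_mem h]
    exact (monomial_mem_restrictSupport K).2 (Or.inl ⟨h, (hdeg v).trans hv⟩)
  · rw [normalFormMap_monomial_of_notMem h]
    exact zero_mem _

end NormalForm

section ThreeVariables

variable {K : Type*} [Field K]

/-- The exponent of `x^i y^j z^k`, writing `x, y, z` for `X 0, X 1, X 2`. -/
noncomputable def xyzExp (i j k : ℕ) : Fin 3 →₀ ℕ :=
  Finsupp.single 0 i + Finsupp.single 1 j + Finsupp.single 2 k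

@[simp] lemma xyzExp_apply_zero (i j k : ℕ) : xyzExp i j k 0 = i := by simp [xyzExp]
@[simp] lemma xyzExp_apply_one (i j k : ℕ) : xyzExp i j k 1 = j := by simp [xyzExp]
@[simp] lemma xyzExp_apply_two (i j k : ℕ) : xyzExp i j k 2 = k := by simp [xyzExp]

lemma ext_fin_three {v w : Fin 3 →₀ ℕ} (h0 : v 0 = w 0) (h1 : v 1 = w 1) (h2 : v 2 = w 2) :
    v = w := by
  ext x
  fin_cases x <;> assumption

lemma xyzExp_self (v : Fin 3 →₀ ℕ) : xyzExp (v 0) (v 1) (v 2) = v :=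
  ext_fin_three (by simp) (by simp) (by simp)

lemma degree_fin_three (v : Fin 3 →₀ ℕ) : v.degree = v 0 + v 1 + v 2 := by
  rw [Finsupp.degree_eq_sum, Fin.sum_univ_three]

lemma xyzExp_le_iff {i j k : ℕ} {v : Fin 3 →₀ ℕ} :
    xyzExp i j k ≤ v ↔ i ≤ v 0 ∧ j ≤ v 1 ∧ k ≤ v 2 := by
  simp [Finsupp.le_def, Fin.forall_fin_succ]

@[simp] lemma xyzExp_add_single_zero (i j k m : ℕ) :
    xyzExp i j k + Finsupp.single 0 m = xyzExp (i + m) j k :=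
  ext_fin_three (by simp) (by simp) (by simp)

@[simp] lemma xyzExp_add_single_one (i j k m : ℕ) :
    xyzExp i j k + Finsupp.single 1 m = xyzExp i (j + m) k :=
  ext_fin_three (by simp) (by simp) (by simp)

@[simp] lemma xyzExp_add_single_two (i j k m : ℕ) :
    xyzExp i j k + Finsupp.single 2 m = xyzExp i j (k + m) :=
  ext_fin_three (by simp) (by simp) (by simp)

lemma xyzExp_add (i j k i' j' k' : ℕ) :
    xyzExp i j k + xyzExp i' j' k' = xyzExp (i + i') (j + j') (k + k') :=
  ext_fin_three (by simp) (by simp) (by simp)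

lemma monomial_xyzExp (i j k : ℕ) :
    monomial (xyzExp i j k) (1 : K) = X 0 ^ i * X 1 ^ j * X 2 ^ k := by
  simp [xyzExp, X_pow_eq_monomial, monomial_mul]

end ThreeVariables

noncomputable def binomialIdeal (K : Type*) [Field K] (a b c α β γ : ℕ) :
    Ideal (MvPolynomial (Fin 3) K) :=
  Ideal.span {X 0 ^ a, X 1 ^ b - X 0 ^ α * X 2 ^ γ, X 2 ^ c,
    X 0 ^ (a - α) * X 1 ^ (b - β), X 1 ^ (b - β) * X 2 ^ (c - γ)}

lemma map_swap_binomialIdeal {K : Type*} [Field K] (a b c α β γ : ℕ) :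
    (binomialIdeal K a b c α β γ).map (renameEquiv K (Equiv.swap 0 2)) =
      binomialIdeal K c b a γ β α := by
  rw [binomialIdeal, binomialIdeal, Ideal.map_span]
  congr 1
  simp only [Set.image_insert_eq, Set.image_singleton, renameEquiv_apply, map_mul, map_sub,
    map_pow, rename_X]
  simp only [Equiv.swap_apply_left, Equiv.swap_apply_right,
    Equiv.swap_apply_of_ne_of_ne (by decide : (1 : Fin 3) ≠ 0) (by decide : (1 : Fin 3) ≠ 2)]
  rw [mul_comm (X 2 ^ α), mul_comm (X 2 ^ (a - α)), mul_comm (X 1 ^ (b - β)) (X 0 ^ (c - γ))]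
  ext p
  simp only [Set.mem_insert_iff, Set.mem_singleton_iff]
  tauto

section BEqTwo

variable {K : Type*} [Field K] {a c : ℕ}

lemma binomialIdeal_b_eq_two (a c : ℕ) :
    binomialIdeal K a 2 c 1 1 1 = Ideal.span {monomial (xyzExp a 0 0) 1,
      monomial (xyzExp 0 2 0) 1 - monomial (xyzExp 1 0 1) 1, monomial (xyzExp 0 0 c) 1,
      monomial (xyzExp (a - 1) 1 0) 1, monomial (xyzExp 0 1 (c - 1)) 1} := by
  simp [binomialIdeal, monomial_xyzExp]

lemma monomial_mem_binomialIdeal_b_eq_two {v : Fin 3 →₀ ℕ}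
    (h : a ≤ v 0 ∨ c ≤ v 2 ∨ a - 1 ≤ v 0 ∧ 1 ≤ v 1 ∨ 1 ≤ v 1 ∧ c - 1 ≤ v 2) :
    monomial v (1 : K) ∈ binomialIdeal K a 2 c 1 1 1 := by
  rw [binomialIdeal_b_eq_two]
  rcases h with h | h | h | h
  · exact monomial_mem_of_le (u := xyzExp a 0 0) (xyzExp_le_iff.2 (by omega))
      (Ideal.subset_span (by simp))
  · exact monomial_mem_of_le (u := xyzExp 0 0 c) (xyzExp_le_iff.2 (by omega))
      (Ideal.subset_span (by simp))
  · exact monomial_mem_of_le (u := xyzExp (a - 1) 1 0) (xyzExp_le_iff.2 (by omega))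
      (Ideal.subset_span (by simp))
  · exact monomial_mem_of_le (u := xyzExp 0 1 (c - 1)) (xyzExp_le_iff.2 (by omega))
      (Ideal.subset_span (by simp))

variable (a c) in
/-- Exponents of the standard monomials of `R ⧸ binomialIdeal K a 2 c 1 1 1`. -/
def stdBEqTwo : Set (Fin 3 →₀ ℕ) :=
  {v | v 1 = 0 ∧ v 0 < a ∧ v 2 < c ∨ v 1 = 1 ∧ v 0 + 1 < a ∧ v 2 + 1 < c}

/-- Rewrites `y^2` to `x z` as long as possible. -/
noncomputable def redBEqTwo (v : Fin 3 →₀ ℕ) : Fin 3 →₀ ℕ :=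
  xyzExp (v 0 + v 1 / 2) (v 1 % 2) (v 2 + v 1 / 2)

lemma redBEqTwo_of_le_one {v : Fin 3 →₀ ℕ} (hv : v 1 ≤ 1) : redBEqTwo v = v := by
  refine ext_fin_three ?_ ?_ ?_ <;> simp [redBEqTwo] <;> omega

lemma degree_redBEqTwo (v : Fin 3 →₀ ℕ) : (redBEqTwo v).degree = v.degree := by
  simp only [degree_fin_three, redBEqTwo, xyzExp_apply_zero, xyzExp_apply_one, xyzExp_apply_two]
  omega

lemma monomial_sub_monomial_redBEqTwo_mem (v : Fin 3 →₀ ℕ) :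
    monomial v 1 - monomial (redBEqTwo v) 1 ∈ binomialIdeal K a 2 c 1 1 1 := by
  suffices ∀ j i k, monomial (xyzExp i j k) (1 : K) - monomial (redBEqTwo (xyzExp i j k)) 1 ∈
      binomialIdeal K a 2 c 1 1 1 by simpa [xyzExp_self] using this (v 1) (v 0) (v 2)
  intro j
  induction j using Nat.twoStepInduction with
  | zero => simp [redBEqTwo_of_le_one]
  | one => simp [redBEqTwo_of_le_one]
  | more j ih _ =>
    intro i k
    have hred : redBEqTwo (xyzExp i (j + 2) k) = redBEqTwo (xyzExp (i + 1) j (k + 1)) := by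
      refine ext_fin_three ?_ ?_ ?_ <;> simp [redBEqTwo] <;> omega
    have hgen : monomial (xyzExp 0 2 0) (1 : K) - monomial (xyzExp 1 0 1) 1 ∈
        binomialIdeal K a 2 c 1 1 1 := by
      rw [binomialIdeal_b_eq_two]; exact Ideal.subset_span (by simp)
    convert add_mem (Ideal.mul_mem_left _ (monomial (xyzExp i j k) 1) hgen) (ih (i + 1) (k + 1))
      using 1
    rw [hred, mul_sub, monomial_mul, monomial_mul, xyzExp_add, xyzExp_add]
    simp only [add_zero, mul_one, sub_add_sub_cancel]

lemma isNormalForm_b_eq_two :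
    IsNormalForm (binomialIdeal K a 2 c 1 1 1) (normalFormMap (stdBEqTwo a c) redBEqTwo) := by
  have hstd : ∀ v, redBEqTwo v ∉ stdBEqTwo a c →
      monomial (redBEqTwo v) (1 : K) ∈ binomialIdeal K a 2 c 1 1 1 := fun v hv =>
    monomial_mem_binomialIdeal_b_eq_two (by simp [stdBEqTwo, redBEqTwo] at hv ⊢; omega)
  rw [binomialIdeal_b_eq_two] at hstd ⊢
  refine isNormalForm_normalFormMap (fun v => ?_) hstd ?_
  · rw [← binomialIdeal_b_eq_two]
    exact monomial_sub_monomial_redBEqTwo_mem v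
  simp only [Set.mem_insert_iff, Set.mem_singleton_iff]
  rintro g (rfl | rfl | rfl | rfl | rfl) v
  · rw [monomial_mul, normalFormMap_monomial_of_notMem]
    simp [stdBEqTwo, redBEqTwo]
    omega
  · rw [mul_sub, monomial_mul, monomial_mul, map_sub, sub_eq_zero]
    refine normalFormMap_monomial_congr (ext_fin_three ?_ ?_ ?_) _ <;> simp [redBEqTwo] <;> omega
  all_goals
    rw [monomial_mul, normalFormMap_monomial_of_notMem]
    simp [stdBEqTwo, redBEqTwo]
    omega

lemma normalFormMap_b_eq_two_X_add_X_mul (hac : a ≤ c) {v : Fin 3 →₀ ℕ} (hv : v ∈ stdBEqTwo a c)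
    (hd : v.degree + 2 ≤ a) :
    normalFormMap (stdBEqTwo a c) redBEqTwo ((X 0 + X 2) * monomial v 1) =
      (X 0 + X 2) * monomial v (1 : K) := by
  simp only [stdBEqTwo, Set.mem_ofPred_eq, degree_fin_three] at hv hd
  rw [X_add_X_mul_monomial, map_add,
    normalFormMap_monomial_of_fixed (redBEqTwo_of_le_one (by simp; omega))
      (by simp [stdBEqTwo]; omega),
    normalFormMap_monomial_of_fixed (redBEqTwo_of_le_one (by simp; omega))
      (by simp [stdBEqTwo]; omega)]

lemma mem_of_X_add_X_mul_mem_b_eq_two (hac : a ≤ c) {d : ℕ} (hd : d + 2 ≤ a)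
    {f : MvPolynomial (Fin 3) K} (hf : f.IsHomogeneous d)
    (hLf : (X 0 + X 2) * f ∈ binomialIdeal K a 2 c 1 1 1) : f ∈ binomialIdeal K a 2 c 1 1 1 := by
  refine (isNormalForm_b_eq_two (K := K)).mem_of_mul_mem (fun h => ?_) hLf
  set φ : MvPolynomial (Fin 3) K →ₗ[K] _ := normalFormMap (stdBEqTwo a c) redBEqTwo
  have hfix : φ ((X 0 + X 2) * φ f) - (X 0 + X 2) * φ f ∈ (⊥ : Submodule K _) :=
    map_mem_of_support_subset (φ ∘ₗ LinearMap.mulLeft K (X 0 + X 2) - LinearMap.mulLeft K _)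
      (fun v hv => by simp [normalFormMap_b_eq_two_X_add_X_mul hac hv.1 (hv.2 ▸ hd), φ])
      (support_normalFormMap_subset degree_redBEqTwo hf)
  rw [Submodule.mem_bot, h, zero_sub, neg_eq_zero] at hfix
  exact (mul_eq_zero.1 hfix).resolve_left (X_add_X_ne_zero (by decide))

lemma monomial_mem_idealSupMul_b_eq_two {n : ℕ} (hn : a ≤ n + 1) {v : Fin 3 →₀ ℕ}
    (hv : v.degree = n + 1) :
    monomial v 1 ∈ idealSupMul (binomialIdeal K a 2 c 1 1 1) (X 0 + X 2) n := by
  suffices monomial (redBEqTwo v) 1 ∈ idealSupMul (binomialIdeal K a 2 c 1 1 1) (X 0 + X 2) n by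
    simpa using add_mem (mem_idealSupMul_of_mem (monomial_sub_monomial_redBEqTwo_mem v)) this
  rw [degree_fin_three] at hv
  have hshift := monomial_add_single_mem_idealSupMul_iff (I := binomialIdeal K a 2 c 1 1 1)
    (p := 0) (q := 2) (u := xyzExp (v 0 + v 1 / 2) (v 1 % 2) 0) (m := v 2 + v 1 / 2) (n := n)
    (by simp [degree_fin_three]; omega)
  simp only [xyzExp_add_single_zero, xyzExp_add_single_two, zero_add] at hshift
  rw [redBEqTwo, ← hshift]
  exact mem_idealSupMul_of_mem (monomial_mem_binomialIdeal_b_eq_two (c := c) (by simp; omega))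

theorem hasWLP_binomialIdeal_b_eq_two (hac : a ≤ c) : hasWLP K (binomialIdeal K a 2 c 1 1 1) := by
  rw [hasWLP_iff]
  refine ⟨X 0 + X 2, (isHomogeneous_X _ _).add (isHomogeneous_X _ _), fun n => ?_⟩
  rcases lt_or_ge (n + 1) a with hn | hn
  · exact Or.inl fun f hf => mem_of_X_add_X_mul_mem_b_eq_two hac (by omega) hf
  · exact Or.inr (homogeneousSubmodule_le_of_monomial_mem fun v hv =>
      monomial_mem_idealSupMul_b_eq_two hn hv)

end BEqTwo


section AEqTwo

variable {K : Type*} [Field K] {b c β : ℕ}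

lemma binomialIdeal_a_eq_two (b c β : ℕ) :
    binomialIdeal K 2 b c 1 β (b - 1) = Ideal.span {monomial (xyzExp 2 0 0) 1,
      monomial (xyzExp 0 b 0) 1 - monomial (xyzExp 1 0 (b - 1)) 1, monomial (xyzExp 0 0 c) 1,
      monomial (xyzExp 1 (b - β) 0) 1, monomial (xyzExp 0 (b - β) (c - (b - 1))) 1} := by
  simp [binomialIdeal, monomial_xyzExp]

lemma monomial_mem_binomialIdeal_a_eq_two {v : Fin 3 →₀ ℕ}
    (h : 2 ≤ v 0 ∨ c ≤ v 2 ∨ 1 ≤ v 0 ∧ b - β ≤ v 1 ∨ b - β ≤ v 1 ∧ c - (b - 1) ≤ v 2) :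
    monomial v (1 : K) ∈ binomialIdeal K 2 b c 1 β (b - 1) := by
  rw [binomialIdeal_a_eq_two]
  rcases h with h | h | h | h
  · exact monomial_mem_of_le (u := xyzExp 2 0 0) (xyzExp_le_iff.2 (by omega))
      (Ideal.subset_span (by simp))
  · exact monomial_mem_of_le (u := xyzExp 0 0 c) (xyzExp_le_iff.2 (by omega))
      (Ideal.subset_span (by simp))
  · exact monomial_mem_of_le (u := xyzExp 1 (b - β) 0) (xyzExp_le_iff.2 (by omega))
      (Ideal.subset_span (by simp))
  · exact monomial_mem_of_le (u := xyzExp 0 (b - β) (c - (b - 1))) (xyzExp_le_iff.2 (by omega))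
      (Ideal.subset_span (by simp))

variable (b c) in
/-- Exponents of the standard monomials of `R ⧸ binomialIdeal K 2 b c 1 β (b - 1)`, where
`t = b - β`. -/
def stdAEqTwo (t : ℕ) : Set (Fin 3 →₀ ℕ) :=
  {v | v 0 = 0 ∧ v 1 < b ∧ v 2 < c ∧ ¬(t ≤ v 1 ∧ c - (b - 1) ≤ v 2) ∨
    v 0 = 1 ∧ v 1 < t ∧ v 2 < c}

variable (b) in
noncomputable def redAEqTwo (v : Fin 3 →₀ ℕ) : Fin 3 →₀ ℕ :=
  if v 0 = 0 ∧ b ≤ v 1 then xyzExp 1 (v 1 - b) (v 2 + (b - 1)) else v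

lemma degree_redAEqTwo (hb : 1 ≤ b) (v : Fin 3 →₀ ℕ) : (redAEqTwo b v).degree = v.degree := by
  unfold redAEqTwo
  split_ifs with h
  · simp only [degree_fin_three, xyzExp_apply_zero, xyzExp_apply_one, xyzExp_apply_two]
    omega
  · rfl

lemma monomial_sub_monomial_redAEqTwo_mem (v : Fin 3 →₀ ℕ) :
    monomial v 1 - monomial (redAEqTwo b v) 1 ∈ binomialIdeal K 2 b c 1 β (b - 1) := by
  obtain ⟨i, j, k, rfl⟩ : ∃ i j k, v = xyzExp i j k := ⟨_, _, _, (xyzExp_self v).symm⟩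
  simp only [redAEqTwo, xyzExp_apply_zero, xyzExp_apply_one, xyzExp_apply_two]
  split_ifs with h
  · obtain ⟨rfl, hj⟩ := h
    have hgen : monomial (xyzExp 0 b 0) (1 : K) - monomial (xyzExp 1 0 (b - 1)) 1 ∈
        binomialIdeal K 2 b c 1 β (b - 1) := by
      rw [binomialIdeal_a_eq_two]; exact Ideal.subset_span (by simp)
    convert Ideal.mul_mem_left _ (monomial (xyzExp 0 (j - b) k) 1) hgen using 1
    rw [mul_sub, monomial_mul, monomial_mul, xyzExp_add, xyzExp_add]
    simp [Nat.sub_add_cancel hj]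
  · simp

lemma isNormalForm_a_eq_two :
    IsNormalForm (binomialIdeal K 2 b c 1 β (b - 1))
      (normalFormMap (stdAEqTwo b c (b - β)) (redAEqTwo b)) := by
  have hstd : ∀ v, redAEqTwo b v ∉ stdAEqTwo b c (b - β) →
      monomial (redAEqTwo b v) (1 : K) ∈ binomialIdeal K 2 b c 1 β (b - 1) := by
    intro v hv
    apply monomial_mem_binomialIdeal_a_eq_two
    unfold redAEqTwo at hv ⊢
    split_ifs at hv ⊢ <;> simp [stdAEqTwo] at hv ⊢ <;> omega
  rw [binomialIdeal_a_eq_two] at hstd ⊢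
  refine isNormalForm_normalFormMap (fun v => ?_) hstd ?_
  · rw [← binomialIdeal_a_eq_two]
    exact monomial_sub_monomial_redAEqTwo_mem v
  simp only [Set.mem_insert_iff, Set.mem_singleton_iff]
  rintro g (rfl | rfl | rfl | rfl | rfl) v
  rotate_left
  · rw [mul_sub, monomial_mul, monomial_mul, map_sub, sub_eq_zero]
    by_cases hv : v 0 = 0
    · refine normalFormMap_monomial_congr (ext_fin_three ?_ ?_ ?_) _ <;>
        simp [redAEqTwo, hv]
    · rw [normalFormMap_monomial_of_notMem, normalFormMap_monomial_of_notMem]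
      · simp [redAEqTwo, stdAEqTwo, hv]
      · simp [redAEqTwo, stdAEqTwo, hv]
        omega
  all_goals
    rw [monomial_mul, normalFormMap_monomial_of_notMem]
    simp only [redAEqTwo]
    split_ifs with h <;> simp [stdAEqTwo] at h ⊢ <;> omega

/-- `K[z] ⬝ g₁ + K[z] ⬝ g₂`. -/
noncomputable def zSpan (g₁ g₂ : MvPolynomial (Fin 3) K) :
    Submodule K (MvPolynomial (Fin 3) K) :=
  LinearMap.range ((LinearMap.mulRight K g₁ ∘ₗ (Polynomial.aeval (X 2)).toLinearMap).coprod
    (LinearMap.mulRight K g₂ ∘ₗ (Polynomial.aeval (X 2)).toLinearMap))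

lemma mem_zSpan {g₁ g₂ p : MvPolynomial (Fin 3) K} :
    p ∈ zSpan g₁ g₂ ↔ ∃ w v : Polynomial K,
      Polynomial.aeval (X 2) w * g₁ + Polynomial.aeval (X 2) v * g₂ = p := by
  simp [zSpan]

lemma eq_zero_of_X_add_X_mul_eq {b t : ℕ} {g : MvPolynomial (Fin 3) K} {w v : Polynomial K}
    (h : (X 1 + X 2) * g = Polynomial.aeval (X 2) w * (X 1 ^ b - X 0 * X 2 ^ (b - 1)) +
      Polynomial.aeval (X 2) v * (X 0 * X 1 ^ t)) : g = 0 := by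
  have hfix : ∀ φ : MvPolynomial (Fin 3) K →ₐ[K] MvPolynomial (Fin 3) K, φ (X 2) = X 2 →
      ∀ u : Polynomial K, φ (Polynomial.aeval (X 2) u) = Polynomial.aeval (X 2) u :=
    fun φ hφ u => by rw [← Polynomial.aeval_algHom_apply, hφ]
  -- `y ↦ -z` kills `X 1 + X 2`, then `x ↦ 0` isolates the coefficient of the binomial
  set σ : MvPolynomial (Fin 3) K →ₐ[K] MvPolynomial (Fin 3) K := aeval ![X 0, -X 2, X 2]
  have h1 := congrArg σ h
  simp only [map_mul, map_add, map_sub, map_pow, hfix σ (by simp [σ])] at h1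
  simp only [σ, aeval_X, Matrix.cons_val_zero, Matrix.cons_val_one, Matrix.cons_val_two,
    Matrix.head_cons, Matrix.tail_cons, neg_add_cancel, zero_mul] at h1
  set χ : MvPolynomial (Fin 3) K →ₐ[K] MvPolynomial (Fin 3) K := aeval ![0, X 1, X 2]
  have h2 := congrArg χ h1
  simp only [map_zero, map_mul, map_add, map_sub, map_pow, map_neg, hfix χ (by simp [χ])] at h2
  simp only [χ, aeval_X, Matrix.cons_val_zero, Matrix.cons_val_two, Matrix.tail_cons,
    Matrix.head_cons, zero_mul, sub_zero, mul_zero, add_zero] at h2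
  have hz : (-X 2 : MvPolynomial (Fin 3) K) ≠ 0 := neg_ne_zero.2 (X_ne_zero 2)
  have hW : Polynomial.aeval (X 2 : MvPolynomial (Fin 3) K) w = 0 :=
    (mul_eq_zero.1 h2.symm).resolve_right (pow_ne_zero _ hz)
  rw [hW, zero_mul, zero_add] at h1
  have hV : Polynomial.aeval (X 2 : MvPolynomial (Fin 3) K) v = 0 :=
    (mul_eq_zero.1 h1.symm).resolve_right (mul_ne_zero (X_ne_zero 0) (pow_ne_zero _ hz))
  rw [hW, hV, zero_mul, zero_mul, add_zero] at h
  exact (mul_eq_zero.1 h).resolve_left (X_add_X_ne_zero (by decide))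

lemma normalFormMap_a_eq_two_X_add_X_mul_sub_mem (hβ : 1 ≤ β) (hβb : β < b)
    {v : Fin 3 →₀ ℕ} (hv : v ∈ stdAEqTwo b c (b - β)) (hd : v.degree + β < c) :
    normalFormMap (stdAEqTwo b c (b - β)) (redAEqTwo b) ((X 1 + X 2) * monomial v 1) -
        (X 1 + X 2) * monomial v (1 : K) ∈
      zSpan (X 1 ^ b - X 0 * X 2 ^ (b - 1)) (X 0 * X 1 ^ (b - β)) := by
  obtain ⟨i, j, k, rfl⟩ : ∃ i j k, v = xyzExp i j k := ⟨_, _, _, (xyzExp_self v).symm⟩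
  simp only [stdAEqTwo, Set.mem_ofPred_eq, xyzExp_apply_zero, xyzExp_apply_one,
    xyzExp_apply_two] at hv
  simp only [degree_fin_three, xyzExp_apply_zero, xyzExp_apply_one, xyzExp_apply_two] at hd
  have hz : redAEqTwo b (xyzExp i j (k + 1)) = xyzExp i j (k + 1) := by simp [redAEqTwo]; omega
  rw [X_add_X_mul_monomial, xyzExp_add_single_one, xyzExp_add_single_two, map_add,
    normalFormMap_monomial_of_fixed hz (by simp [stdAEqTwo]; omega), add_sub_add_right_eq_sub]
  rcases hv with ⟨rfl, hj, hk, hjk⟩ | ⟨rfl, hj, hk⟩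
  · rcases (show j + 1 = b ∨ j + 1 < b by omega) with hjb | hjb
    · have hy : redAEqTwo b (xyzExp 0 (j + 1) k) = xyzExp 1 0 (k + (b - 1)) := by
        simp [redAEqTwo, hjb]
      rw [normalFormMap_monomial_of_mem (by rw [hy]; simp [stdAEqTwo]; omega), hy, mem_zSpan]
      refine ⟨-Polynomial.X ^ k, 0, ?_⟩
      simp [monomial_xyzExp, ← hjb]
      ring
    · have hy : redAEqTwo b (xyzExp 0 (j + 1) k) = xyzExp 0 (j + 1) k := by
        simp [redAEqTwo]; omega
      rw [normalFormMap_monomial_of_fixed hy (by simp [stdAEqTwo]; omega), sub_self]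
      exact zero_mem _
  · have hy : redAEqTwo b (xyzExp 1 (j + 1) k) = xyzExp 1 (j + 1) k := by simp [redAEqTwo]
    rcases (show j + 1 = b - β ∨ j + 1 < b - β by omega) with hjt | hjt
    · rw [normalFormMap_monomial_of_notMem (by rw [hy]; simp [stdAEqTwo]; omega), zero_sub,
        mem_zSpan]
      refine ⟨0, -Polynomial.X ^ k, ?_⟩
      simp [monomial_xyzExp, ← hjt]
      ring
    · rw [normalFormMap_monomial_of_fixed hy (by simp [stdAEqTwo]; omega), sub_self]
      exact zero_mem _

lemma mem_of_X_add_X_mul_mem_a_eq_two (hβ : 1 ≤ β) (hβb : β < b) {d : ℕ} (hd : d + β < c)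
    {f : MvPolynomial (Fin 3) K} (hf : f.IsHomogeneous d)
    (hLf : (X 1 + X 2) * f ∈ binomialIdeal K 2 b c 1 β (b - 1)) :
    f ∈ binomialIdeal K 2 b c 1 β (b - 1) := by
  refine (isNormalForm_a_eq_two (K := K)).mem_of_mul_mem (fun h => ?_) hLf
  set φ : MvPolynomial (Fin 3) K →ₗ[K] _ := normalFormMap (stdAEqTwo b c (b - β)) (redAEqTwo b)
  have hM : φ ((X 1 + X 2) * φ f) - (X 1 + X 2) * φ f ∈
      zSpan (X 1 ^ b - X 0 * X 2 ^ (b - 1)) (X 0 * X 1 ^ (b - β)) :=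
    map_mem_of_support_subset (φ ∘ₗ LinearMap.mulLeft K (X 1 + X 2) - LinearMap.mulLeft K _)
      (fun v hv => by
        simpa using normalFormMap_a_eq_two_X_add_X_mul_sub_mem hβ hβb hv.1 (hv.2 ▸ hd))
      (support_normalFormMap_subset (degree_redAEqTwo (by omega)) hf)
  rw [h, zero_sub, neg_mem_iff, mem_zSpan] at hM
  obtain ⟨w, v, hwv⟩ := hM
  exact eq_zero_of_X_add_X_mul_eq hwv.symm

lemma monomial_mem_idealSupMul_a_eq_two (hβb : β < b) (hbc : b ≤ c) {n : ℕ} (hn : c ≤ n + β)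
    {v : Fin 3 →₀ ℕ} (hv : v.degree = n + 1) :
    monomial v 1 ∈ idealSupMul (binomialIdeal K 2 b c 1 β (b - 1)) (X 1 + X 2) n := by
  set S := idealSupMul (binomialIdeal K 2 b c 1 β (b - 1)) (X 1 + X 2) n
  have hshift : ∀ i j k, i + j + k = n + 1 →
      (monomial (xyzExp i j k) 1 ∈ S ↔ monomial (xyzExp i (j + k) 0) 1 ∈ S) := fun i j k h => by
    simpa using (monomial_add_single_mem_idealSupMul_iff (p := 1) (q := 2)
      (u := xyzExp i j 0) (m := k) (n := n) (by simp [degree_fin_three]; omega)).symm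
  obtain ⟨i, j, k, rfl⟩ : ∃ i j k, v = xyzExp i j k := ⟨_, _, _, (xyzExp_self v).symm⟩
  simp only [degree_fin_three, xyzExp_apply_zero, xyzExp_apply_one, xyzExp_apply_two] at hv
  rcases (show 2 ≤ i ∨ i = 1 ∨ i = 0 by omega) with hi | rfl | rfl
  · exact mem_idealSupMul_of_mem (monomial_mem_binomialIdeal_a_eq_two (by simp; omega))
  · rw [hshift 1 j k hv]
    exact mem_idealSupMul_of_mem (monomial_mem_binomialIdeal_a_eq_two (by simp; omega))
  · rw [hshift 0 j k hv, show j + k = (b - β) + (n + 1 - (b - β)) by omega,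
      ← hshift 0 _ _ (by omega)]
    exact mem_idealSupMul_of_mem (monomial_mem_binomialIdeal_a_eq_two (by simp; omega))

theorem hasWLP_binomialIdeal_a_eq_two (hβ : 1 ≤ β) (hβb : β < b) (hbc : b ≤ c) :
    hasWLP K (binomialIdeal K 2 b c 1 β (b - 1)) := by
  rw [hasWLP_iff]
  refine ⟨X 1 + X 2, (isHomogeneous_X _ _).add (isHomogeneous_X _ _), fun n => ?_⟩
  rcases lt_or_ge (n + β) c with hn | hn
  · exact Or.inl fun f hf => mem_of_X_add_X_mul_mem_a_eq_two hβ hβb hn hf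
  · exact Or.inr (homogeneousSubmodule_le_of_monomial_mem fun v hv =>
      monomial_mem_idealSupMul_a_eq_two hβb hbc hn hv)

end AEqTwo

end WLP

open WLP in
theorem stmt_1_general (K : Type*) [Field K] (a b c α β γ : ℕ)
    (hα1 : 1 ≤ α) (hα2 : α ≤ a - 1)
    (hβ1 : 1 ≤ β) (hβ2 : β ≤ b - 1)
    (hγ1 : 1 ≤ γ) (hγ2 : γ ≤ c - 1)
    (hαγ : α + γ = b)
    (habc : a = 2 ∨ b = 2 ∨ c = 2) :
    hasWLP K (Ideal.span {(X 0 : MvPolynomial (Fin 3) K) ^ a,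
      X 1 ^ b - X 0 ^ α * X 2 ^ γ, X 2 ^ c,
      X 0 ^ (a - α) * X 1 ^ (b - β), X 1 ^ (b - β) * X 2 ^ (c - γ)}) := by
  change hasWLP K (binomialIdeal K a b c α β γ)
  wlog h : a = 2 ∨ b = 2 ∧ a ≤ c generalizing a c α γ
  · rw [← map_swap_binomialIdeal]
    exact hasWLP_map_renameEquiv _ (this c a γ α hγ1 hγ2 hα1 hα2 (by omega) (by omega) (by omega))
  rcases h with rfl | ⟨rfl, hac⟩
  · obtain rfl : α = 1 := by omega
    obtain rfl : γ = b - 1 := by omega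
    exact hasWLP_binomialIdeal_a_eq_two hβ1 (by omega) (by omega)
  · obtain ⟨rfl, rfl, rfl⟩ : α = 1 ∧ β = 1 ∧ γ = 1 := by omega
    exact hasWLP_binomialIdeal_b_eq_two hac

theorem stmt_1 (K : Type*) [Field K] [CharZero K] (a b c α β γ : ℕ)
    (hα1 : 1 ≤ α) (hα2 : α ≤ a - 1)
    (hβ1 : 1 ≤ β) (hβ2 : β ≤ b - 1)
    (hγ1 : 1 ≤ γ) (hγ2 : γ ≤ c - 1)
    (hαγ : α + γ = b)
    (habc : a = 2 ∨ b = 2 ∨ c = 2) :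
    hasWLP K (Ideal.span {(X 0 : MvPolynomial (Fin 3) K) ^ a,
      X 1 ^ b - X 0 ^ α * X 2 ^ γ, X 2 ^ c,
      X 0 ^ (a - α) * X 1 ^ (b - β), X 1 ^ (b - β) * X 2 ^ (c - γ)}) :=
  stmt_1_general K a b c α β γ hα1 hα2 hβ1 hβ2 hγ1 hγ2 hαγ habc
end

section
/- Let K be a field of characteristic zero, R = K[x,y,z], and let a, b, c, α, β, γ be integers with 1 ≤ α ≤ a−1, 1 ≤ β ≤ b−1, 1 ≤ γ ≤ c−1 and α + γ = b. Set 𝔞 = (x^a, y^b − x^α z^γ, z^c) ⊆ R and I = (x^a, y^b − x^α z^γ, z^c, x^{a−α} y^{b−β}, y^{b−β} z^{c−γ}) ⊆ R. Then I equals the colon ideal 𝔞 : y^β = { f ∈ R : f·y^β ∈ 𝔞 }. -/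
open MvPolynomial

section Helpers

variable {σ S : Type*} [CommSemiring S]

lemma coeff_mul_monomial_zero (h : MvPolynomial σ S) (t d : σ →₀ ℕ) (c : S)
    (hd : ¬ t ≤ d) : coeff d (h * monomial t c) = 0 := by
  rw [coeff_mul_monomial', if_neg hd]

lemma coeff_mul_monomial_vanish (i : σ) (n m : ℕ) (h : MvPolynomial σ S)
    (hh : ∀ d, n ≤ d i → coeff d h = 0) (t : σ →₀ ℕ) (ht : t i = m) (c : S) :
    ∀ d, n + m ≤ d i → coeff d (h * monomial t c) = 0 := by
  intro d hd
  rw [coeff_mul_monomial']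
  split_ifs with hle
  · rw [hh _ ?_, zero_mul]
    have h1 : t i ≤ d i := hle i
    rw [Finsupp.tsub_apply]
    omega
  · rfl

lemma coeff_modMonomial_vanish (i : σ) (n : ℕ) (h : MvPolynomial σ S) :
    ∀ d, n ≤ d i → coeff d (h.modMonomial (Finsupp.single i n)) = 0 := fun _ hd =>
  coeff_modMonomial_of_le h (Finsupp.single_le_iff.mpr hd)

lemma coeff_modMonomial_preserve (P : (σ →₀ ℕ) → Prop) (s : σ →₀ ℕ)
    (h : MvPolynomial σ S) (hh : ∀ d, P d → coeff d h = 0) :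
    ∀ d, P d → coeff d (h.modMonomial s) = 0 := by
  intro d hd
  by_cases hle : s ≤ d
  · exact coeff_modMonomial_of_le h hle
  · rw [coeff_modMonomial_of_not_le h hle]; exact hh d hd

lemma modMonomial_eq_self (i : σ) (n : ℕ) (h : MvPolynomial σ S)
    (hh : ∀ d, n ≤ d i → coeff d h = 0) :
    h.modMonomial (Finsupp.single i n) = h := by
  ext d
  by_cases hle : Finsupp.single i n ≤ d
  · rw [coeff_modMonomial_of_le h hle]
    exact (hh d (Finsupp.single_le_iff.mp hle)).symm
  · exact coeff_modMonomial_of_not_le h hle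

end Helpers

section Key

variable {K : Type*} [Field K]

/-- Colon of the monomial ideal `(x^(a'+α), z^(c'+γ))` by `x^α z^γ`. -/
lemma key_colon (a' c' α γ : ℕ) (g u v : MvPolynomial (Fin 3) K)
    (h : g * (X 0 ^ α * X 2 ^ γ) = u * X 0 ^ (a' + α) + v * X 2 ^ (c' + γ)) :
    ∃ A B : MvPolynomial (Fin 3) K, g = A * X 0 ^ a' + B * X 2 ^ c' := by
  classical
  set g1 := g.modMonomial (Finsupp.single 0 a') with hg1def
  set A := g.divMonomial (Finsupp.single 0 a') with hAdef
  set C := g1.modMonomial (Finsupp.single 2 c') with hCdef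
  set B := g1.divMonomial (Finsupp.single 2 c') with hBdef
  have e0 := modMonomial_add_divMonomial g (Finsupp.single 0 a')
  have e1 := modMonomial_add_divMonomial g1 (Finsupp.single 2 c')
  rw [← X_pow_eq_monomial] at e0 e1
  have hg' : g = C + X 2 ^ c' * B + X 0 ^ a' * A := by
    rw [← hg1def, ← hAdef] at e0
    rw [← hCdef, ← hBdef] at e1
    linear_combination -e0 - e1
  have hC0 : ∀ d, a' ≤ d 0 → coeff d C = 0 :=
    coeff_modMonomial_preserve (fun d => a' ≤ d 0) _ _ (coeff_modMonomial_vanish 0 a' g)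
  have hC2 : ∀ d, c' ≤ d 2 → coeff d C = 0 := coeff_modMonomial_vanish 2 c' g1
  set tw : Fin 3 →₀ ℕ := Finsupp.single 0 α + Finsupp.single 2 γ with htwdef
  have hw_mon : (X 0 : MvPolynomial (Fin 3) K) ^ α * X 2 ^ γ = monomial tw 1 := by
    rw [X_pow_eq_monomial, X_pow_eq_monomial, monomial_mul, mul_one]
  have htw0 : tw 0 = α := by simp [htwdef, Finsupp.single_apply]
  have htw2 : tw 2 = γ := by simp [htwdef, Finsupp.single_apply]
  have hCw0 := coeff_mul_monomial_vanish 0 a' α C hC0 tw htw0 (1 : K)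
  have hCw2 := coeff_mul_monomial_vanish 2 c' γ C hC2 tw htw2 (1 : K)
  have hmain : C * (X 0 ^ α * X 2 ^ γ)
      = (u - X 2 ^ γ * A) * X 0 ^ (a' + α) + (v - X 0 ^ α * B) * X 2 ^ (c' + γ) := by
    linear_combination h - (X 0 ^ α * X 2 ^ γ) * hg'
  have hmain2 : C * monomial tw 1
      = (u - X 2 ^ γ * A) * monomial (Finsupp.single (0 : Fin 3) (a' + α)) 1
        + (v - X 0 ^ α * B) * monomial (Finsupp.single (2 : Fin 3) (c' + γ)) 1 := by
    rw [← hw_mon, ← X_pow_eq_monomial, ← X_pow_eq_monomial]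
    exact hmain
  have hCw : C * (X 0 ^ α * X 2 ^ γ) = 0 := by
    rw [hw_mon]
    ext d
    rw [coeff_zero]
    by_cases h0 : a' + α ≤ d 0
    · exact hCw0 d h0
    by_cases h2 : c' + γ ≤ d 2
    · exact hCw2 d h2
    · have h0' : ¬ Finsupp.single (0 : Fin 3) (a' + α) ≤ d :=
        fun hle => h0 (Finsupp.single_le_iff.mp hle)
      have h2' : ¬ Finsupp.single (2 : Fin 3) (c' + γ) ≤ d :=
        fun hle => h2 (Finsupp.single_le_iff.mp hle)
      rw [hmain2, coeff_add, coeff_mul_monomial_zero _ _ _ _ h0',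
        coeff_mul_monomial_zero _ _ _ _ h2', add_zero]
  have hwne : (X 0 : MvPolynomial (Fin 3) K) ^ α * X 2 ^ γ ≠ 0 :=
    mul_ne_zero (pow_ne_zero _ (X_ne_zero _)) (pow_ne_zero _ (X_ne_zero _))
  have hC : C = 0 := (mul_eq_zero.mp hCw).resolve_right hwne
  exact ⟨A, B, by rw [hg', hC]; ring⟩

end Key

theorem stmt_3 (K : Type*) [Field K] [CharZero K] (a b c α β γ : ℕ)
    (hα1 : 1 ≤ α) (hα2 : α ≤ a - 1)
    (hβ1 : 1 ≤ β) (hβ2 : β ≤ b - 1)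
    (hγ1 : 1 ≤ γ) (hγ2 : γ ≤ c - 1)
    (hαγ : α + γ = b) :
    (Ideal.span {(X 0 : MvPolynomial (Fin 3) K) ^ a,
      X 1 ^ b - X 0 ^ α * X 2 ^ γ, X 2 ^ c,
      X 0 ^ (a - α) * X 1 ^ (b - β), X 1 ^ (b - β) * X 2 ^ (c - γ)}) =
      (Ideal.span {(X 0 : MvPolynomial (Fin 3) K) ^ a,
        X 1 ^ b - X 0 ^ α * X 2 ^ γ, X 2 ^ c}).colon
        (Ideal.span {(X 1 : MvPolynomial (Fin 3) K) ^ β}) := by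
  classical
  obtain ⟨a', rfl⟩ : ∃ a', a = a' + α := ⟨a - α, by omega⟩
  obtain ⟨b', rfl⟩ : ∃ b', b = b' + β := ⟨b - β, by omega⟩
  obtain ⟨c', rfl⟩ : ∃ c', c = c' + γ := ⟨c - γ, by omega⟩
  simp only [Nat.add_sub_cancel]
  apply le_antisymm
  · rw [Ideal.span_le]
    rintro g hg
    simp only [Set.mem_insert_iff, Set.mem_singleton_iff] at hg
    rw [SetLike.mem_coe, Ideal.mem_colon_span_singleton]
    rcases hg with rfl | rfl | rfl | rfl | rfl
    · exact Ideal.mul_mem_right _ _ (Ideal.subset_span (by simp))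
    · exact Ideal.mul_mem_right _ _ (Ideal.subset_span (by simp))
    · exact Ideal.mul_mem_right _ _ (Ideal.subset_span (by simp))
    · have heq : (X 0 : MvPolynomial (Fin 3) K) ^ a' * X 1 ^ b' * X 1 ^ β
          = X 0 ^ a' * (X 1 ^ (b' + β) - X 0 ^ α * X 2 ^ γ)
            + X 2 ^ γ * X 0 ^ (a' + α) := by ring
      rw [heq]
      exact Ideal.add_mem _
        (Ideal.mul_mem_left _ _ (Ideal.subset_span (by simp)))
        (Ideal.mul_mem_left _ _ (Ideal.subset_span (by simp)))
    · have heq : (X 1 : MvPolynomial (Fin 3) K) ^ b' * X 2 ^ c' * X 1 ^ β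
          = X 2 ^ c' * (X 1 ^ (b' + β) - X 0 ^ α * X 2 ^ γ)
            + X 0 ^ α * X 2 ^ (c' + γ) := by ring
      rw [heq]
      exact Ideal.add_mem _
        (Ideal.mul_mem_left _ _ (Ideal.subset_span (by simp)))
        (Ideal.mul_mem_left _ _ (Ideal.subset_span (by simp)))
  · intro f hf
    rw [Ideal.mem_colon_span_singleton] at hf
    rw [Ideal.mem_span_insert] at hf
    obtain ⟨p, w1, hw1, hfe⟩ := hf
    obtain ⟨q, r, hqr⟩ := Ideal.mem_span_pair.mp hw1
    set s : Fin 3 →₀ ℕ := Finsupp.single 1 β with hsdef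
    have hyβ : (X 1 : MvPolynomial (Fin 3) K) ^ β = monomial s 1 := X_pow_eq_monomial
    have ep := modMonomial_add_divMonomial p s
    have eq' := modMonomial_add_divMonomial q s
    have er := modMonomial_add_divMonomial r s
    rw [← hyβ] at ep eq' er
    have hEG : p.modMonomial s * X 0 ^ (a' + α) + r.modMonomial s * X 2 ^ (c' + γ)
        - q.modMonomial s * (X 0 ^ α * X 2 ^ γ)
        = X 1 ^ β * (f - (p.divMonomial s * X 0 ^ (a' + α)
            + q.divMonomial s * (X 1 ^ (b' + β) - X 0 ^ α * X 2 ^ γ)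
            + r.divMonomial s * X 2 ^ (c' + γ)
            + q.modMonomial s * X 1 ^ b')) := by
      linear_combination -hfe + hqr + X 0 ^ (a' + α) * ep + X 2 ^ (c' + γ) * er
        + (X 1 ^ (b' + β) - X 0 ^ α * X 2 ^ γ) * eq'
    set tw : Fin 3 →₀ ℕ := Finsupp.single 0 α + Finsupp.single 2 γ with htwdef
    have hw_mon : (X 0 : MvPolynomial (Fin 3) K) ^ α * X 2 ^ γ = monomial tw 1 := by
      rw [X_pow_eq_monomial, X_pow_eq_monomial, monomial_mul, mul_one]
    have htw1 : tw 1 = 0 := by simp [htwdef, Finsupp.single_apply]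
    have hbound : ∀ d, β ≤ d 1 →
        coeff d (p.modMonomial s * X 0 ^ (a' + α) + r.modMonomial s * X 2 ^ (c' + γ)
          - q.modMonomial s * (X 0 ^ α * X 2 ^ γ)) = 0 := by
      intro d hd
      have h1 := coeff_mul_monomial_vanish 1 β 0 (p.modMonomial s)
        (coeff_modMonomial_vanish 1 β p) (Finsupp.single 0 (a' + α))
        (Finsupp.single_eq_of_ne (by decide)) (1 : K) d (by omega)
      have h2 := coeff_mul_monomial_vanish 1 β 0 (r.modMonomial s)
        (coeff_modMonomial_vanish 1 β r) (Finsupp.single 2 (c' + γ))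
        (Finsupp.single_eq_of_ne (by decide)) (1 : K) d (by omega)
      have h3 := coeff_mul_monomial_vanish 1 β 0 (q.modMonomial s)
        (coeff_modMonomial_vanish 1 β q) tw htw1 (1 : K) d (by omega)
      rw [X_pow_eq_monomial (n := (0 : Fin 3)), X_pow_eq_monomial (n := (2 : Fin 3)),
        hw_mon, coeff_sub, coeff_add, h1, h2, h3]
      ring
    have h5 : p.modMonomial s * X 0 ^ (a' + α) + r.modMonomial s * X 2 ^ (c' + γ)
        - q.modMonomial s * (X 0 ^ α * X 2 ^ γ) = 0 := by
      have hself := modMonomial_eq_self 1 β _ hbound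
      rw [← hsdef] at hself
      rw [← hself, hEG, hyβ]
      exact monomial_mul_modMonomial s _
    have h6 : (X 1 : MvPolynomial (Fin 3) K) ^ β * (f - (p.divMonomial s * X 0 ^ (a' + α)
        + q.divMonomial s * (X 1 ^ (b' + β) - X 0 ^ α * X 2 ^ γ)
        + r.divMonomial s * X 2 ^ (c' + γ)
        + q.modMonomial s * X 1 ^ b')) = 0 := by rw [← hEG]; exact h5
    have h7 := (mul_eq_zero.mp h6).resolve_left (pow_ne_zero _ (X_ne_zero _))
    rw [sub_eq_zero] at h7
    have hq0w : q.modMonomial s * (X 0 ^ α * X 2 ^ γ)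
        = p.modMonomial s * X 0 ^ (a' + α) + r.modMonomial s * X 2 ^ (c' + γ) := by
      linear_combination -h5
    obtain ⟨A, B, hq0⟩ := key_colon a' c' α γ (q.modMonomial s)
      (p.modMonomial s) (r.modMonomial s) hq0w
    rw [h7, hq0]
    have hre : (A * X 0 ^ a' + B * X 2 ^ c') * (X 1 : MvPolynomial (Fin 3) K) ^ b'
        = A * (X 0 ^ a' * X 1 ^ b') + B * (X 1 ^ b' * X 2 ^ c') := by ring
    rw [hre]
    refine Ideal.add_mem _ (Ideal.add_mem _ (Ideal.add_mem _ ?_ ?_) ?_) (Ideal.add_mem _ ?_ ?_) <;>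
      exact Ideal.mul_mem_left _ _ (Ideal.subset_span (by simp))
end

section
/- Let K be a field of characteristic zero, R = K[x,y,z], and let a ≥ c ≥ 2 be integers. Then the quotient of R by the ideal I = (x^a, y^2 − xz, z^c, x^{a−1}y, y z^{c−1}) has the weak Lefschetz property. -/
open MvPolynomial

/-!
Multiplication by `x` is a weak Lefschetz element. The quadratic Veronese map
`φ : x ↦ s², y ↦ st, z ↦ t²` kills `y² - xz`, and modulo `y² - xz` every polynomial is
`f₀(x, z) + y f₁(x, z)`, whose image `f₀(s², t²) + st f₁(s², t²)` keeps the two parts apart by the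
parity of the exponents. Hence `I` is the preimage under `φ` of the monomial ideal
`J = (s^{2a}, s^{2a-1}t, st^{2c-1}, t^{2c})`.

Injectivity in degree `d ≤ a - 2`: if `xF ∈ I` then `s²φ(F) ∈ J`; the `s`-exponents of `s²φ(F)` stay
below `2a - 1`, so only `st^{2c-1}` and `t^{2c}` can divide its monomials, and since `φ(F)` has even
degree `2d` this already forces `φ(F) ∈ J`, i.e. `F ∈ I`.

Surjectivity in degree `≥ a`: after replacing `y²` by `xz` a monomial is divisible by `x`, unless it
is `z^r` or `yz^r`, and those lie in `I` because `c ≤ a`.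
-/

open Finsupp

section Conic

variable {R : Type*} [CommRing R] {a c : ℕ}

variable (R) in
noncomputable def conicIdeal (a c : ℕ) : Ideal (MvPolynomial (Fin 3) R) :=
  Ideal.span {(X 0 : MvPolynomial (Fin 3) R) ^ a, X 1 ^ 2 - X 0 * X 2, X 2 ^ c,
    X 0 ^ (a - 1) * X 1, X 1 * X 2 ^ (c - 1)}

variable (R) in
noncomputable def veronese : MvPolynomial (Fin 3) R →ₐ[R] MvPolynomial (Fin 2) R :=
  aeval ![X 0 ^ 2, X 0 * X 1, X 1 ^ 2]

/-- The exponents of the images under `veronese` of the monomial generators of `conicIdeal`. -/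
def veroneseExps (a c : ℕ) : Set (Fin 2 →₀ ℕ) :=
  {single 0 (2 * a), single 0 (2 * (a - 1) + 1) + single 1 1,
    single 0 1 + single 1 (2 * (c - 1) + 1), single 1 (2 * c)}

variable (R) in
noncomputable def veroneseIdeal (a c : ℕ) : Ideal (MvPolynomial (Fin 2) R) :=
  Ideal.span ((fun e => monomial e 1) '' veroneseExps a c)

@[simp] lemma veronese_X_zero : veronese R (X 0) = X 0 ^ 2 := by simp [veronese]

@[simp] lemma veronese_X_one : veronese R (X 1) = X 0 * X 1 := by simp [veronese]

@[simp] lemma veronese_X_two : veronese R (X 2) = X 1 ^ 2 := by simp [veronese]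

lemma veronese_X_one_sq_sub : veronese R (X 1 ^ 2 - X 0 * X 2) = 0 := by
  rw [map_sub, map_mul, map_pow, veronese_X_zero, veronese_X_one, veronese_X_two]
  ring

lemma veronese_rename (f : MvPolynomial (Fin 2) R) :
    veronese R (rename ![0, 2] f) = expand 2 f := by
  rw [← AlgHom.comp_apply]
  congr 1
  ext i : 1
  fin_cases i <;> simp

lemma exists_mem_veroneseExps_le_iff (n : Fin 2 →₀ ℕ) :
    (∃ e ∈ veroneseExps a c, e ≤ n) ↔ 2 * a ≤ n 0 ∨ (2 * (a - 1) + 1 ≤ n 0 ∧ 1 ≤ n 1) ∨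
      (1 ≤ n 0 ∧ 2 * (c - 1) + 1 ≤ n 1) ∨ 2 * c ≤ n 1 := by
  simp [veroneseExps, Finsupp.le_def, Fin.forall_fin_two]

lemma mem_veroneseIdeal_iff {P : MvPolynomial (Fin 2) R} :
    P ∈ veroneseIdeal R a c ↔ ∀ n ∈ P.support, 2 * a ≤ n 0 ∨
      (2 * (a - 1) + 1 ≤ n 0 ∧ 1 ≤ n 1) ∨ (1 ≤ n 0 ∧ 2 * (c - 1) + 1 ≤ n 1) ∨ 2 * c ≤ n 1 := by
  simp only [veroneseIdeal, mem_ideal_span_monomial_image, exists_mem_veroneseExps_le_iff]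

lemma X_zero_pow_mul_X_one_pow_mem_veroneseIdeal {p q : ℕ}
    (h : 2 * a ≤ p ∨ (2 * (a - 1) + 1 ≤ p ∧ 1 ≤ q) ∨ (1 ≤ p ∧ 2 * (c - 1) + 1 ≤ q) ∨ 2 * c ≤ q) :
    (X 0 ^ p * X 1 ^ q : MvPolynomial (Fin 2) R) ∈ veroneseIdeal R a c := by
  rw [mem_veroneseIdeal_iff, X_pow_eq_monomial, X_pow_eq_monomial, monomial_mul, one_mul]
  intro n hn
  rw [Finset.mem_singleton.mp (support_monomial_subset hn)]
  simpa using h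

lemma conicIdeal_le_comap_veronese :
    conicIdeal R a c ≤ (veroneseIdeal R a c).comap (veronese R) := by
  rw [conicIdeal, Ideal.span_le]
  intro F hF
  simp only [Set.mem_insert_iff, Set.mem_singleton_iff] at hF
  rcases hF with rfl | rfl | rfl | rfl | rfl <;> rw [SetLike.mem_coe, Ideal.mem_comap]
  · rw [show veronese R (X 0 ^ a) = X 0 ^ (2 * a) * X 1 ^ 0 by simp [pow_mul]]
    exact X_zero_pow_mul_X_one_pow_mem_veroneseIdeal (by omega)
  · rw [veronese_X_one_sq_sub]
    exact zero_mem _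
  · rw [show veronese R (X 2 ^ c) = X 0 ^ 0 * X 1 ^ (2 * c) by simp [pow_mul]]
    exact X_zero_pow_mul_X_one_pow_mem_veroneseIdeal (by omega)
  · rw [show veronese R (X 0 ^ (a - 1) * X 1) = X 0 ^ (2 * (a - 1) + 1) * X 1 ^ 1 by
      rw [map_mul, map_pow, veronese_X_zero, veronese_X_one]; ring]
    exact X_zero_pow_mul_X_one_pow_mem_veroneseIdeal (by omega)
  · rw [show veronese R (X 1 * X 2 ^ (c - 1)) = X 0 ^ 1 * X 1 ^ (2 * (c - 1) + 1) by
      rw [map_mul, map_pow, veronese_X_one, veronese_X_two]; ring]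
    exact X_zero_pow_mul_X_one_pow_mem_veroneseIdeal (by omega)

lemma exists_sub_rename_add_X_one_mul_rename_mem (F : MvPolynomial (Fin 3) R) :
    ∃ f₀ f₁ : MvPolynomial (Fin 2) R,
      F - (rename ![0, 2] f₀ + X 1 * rename ![0, 2] f₁) ∈ Ideal.span {X 1 ^ 2 - X 0 * X 2} := by
  induction F using MvPolynomial.induction_on with
  | C r => exact ⟨C r, 0, by simp⟩
  | add F G hF hG =>
    obtain ⟨f₀, f₁, hf⟩ := hF
    obtain ⟨g₀, g₁, hg⟩ := hG
    refine ⟨f₀ + g₀, f₁ + g₁, ?_⟩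
    convert add_mem hf hg using 1
    simp only [map_add]
    ring
  | mul_X F i hF =>
    obtain ⟨f₀, f₁, hf⟩ := hF
    match i with
    | 0 =>
      refine ⟨f₀ * X 0, f₁ * X 0, ?_⟩
      convert Ideal.mul_mem_right (X 0) _ hf using 1
      simp only [map_mul, rename_X, Matrix.cons_val_zero]
      ring
    | 1 =>
      refine ⟨f₁ * X 0 * X 1, f₀, ?_⟩
      convert add_mem (Ideal.mul_mem_right (X 1) _ hf)
        (Ideal.mul_mem_left _ (rename ![0, 2] f₁) (Ideal.mem_span_singleton_self _)) using 1
      simp only [map_mul, rename_X, Matrix.cons_val_zero, Matrix.cons_val_one,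
        Matrix.cons_val_fin_one]
      ring
    | 2 =>
      refine ⟨f₀ * X 1, f₁ * X 1, ?_⟩
      convert Ideal.mul_mem_right (X 2) _ hf using 1
      simp only [map_mul, rename_X, Matrix.cons_val_one, Matrix.cons_val_fin_one]
      ring

lemma X_zero_mul_X_one_eq_monomial :
    (X 0 * X 1 : MvPolynomial (Fin 2) R) = monomial (single 0 1 + single 1 1) 1 := by
  rw [X, X, monomial_mul, one_mul]

lemma coeff_two_smul_expand_add (f₀ f₁ : MvPolynomial (Fin 2) R) (m : Fin 2 →₀ ℕ) :
    (expand 2 f₀ + X 0 * X 1 * expand 2 f₁).coeff (2 • m) = f₀.coeff m := by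
  rw [coeff_add, coeff_expand_smul _ two_ne_zero, add_eq_left, X_zero_mul_X_one_eq_monomial,
    coeff_monomial_mul']
  split_ifs with h
  · rw [one_mul]
    refine coeff_expand_of_not_dvd _ (i := 1) ?_
    have h₁ : 1 ≤ 2 * m 1 := by simpa using Finsupp.le_def.mp h 1
    rw [show (2 • m - (single 0 1 + single 1 1) : Fin 2 →₀ ℕ) 1 = 2 * m 1 - 1 by simp]
    omega
  · rfl

lemma coeff_add_two_smul_expand_add (f₀ f₁ : MvPolynomial (Fin 2) R) (m : Fin 2 →₀ ℕ) :
    (expand 2 f₀ + X 0 * X 1 * expand 2 f₁).coeff (single 0 1 + single 1 1 + 2 • m) =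
      f₁.coeff m := by
  rw [coeff_add, X_zero_mul_X_one_eq_monomial, coeff_monomial_mul, one_mul,
    coeff_expand_smul _ two_ne_zero, add_eq_right]
  exact coeff_expand_of_not_dvd _ (i := 0) (by simp)

lemma mem_span_X_zero_pow_X_one_pow_iff {f : MvPolynomial (Fin 2) R} {p q : ℕ} :
    f ∈ Ideal.span {X 0 ^ p, X 1 ^ q} ↔ ∀ m ∈ f.support, p ≤ m 0 ∨ q ≤ m 1 := by
  rw [X_pow_eq_monomial, X_pow_eq_monomial, ← Set.image_pair (fun e => monomial e (1 : R)),
    mem_ideal_span_monomial_image]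
  simp [Finsupp.single_le_iff]

lemma rename_mem_conicIdeal {f : MvPolynomial (Fin 2) R}
    (hf : f ∈ Ideal.span {X 0 ^ a, X 1 ^ c}) : rename ![0, 2] f ∈ conicIdeal R a c := by
  obtain ⟨α, β, rfl⟩ := Ideal.mem_span_pair.mp hf
  simp only [map_add, map_mul, map_pow, rename_X]
  exact add_mem (Ideal.mul_mem_left _ _ (Ideal.subset_span (by simp)))
    (Ideal.mul_mem_left _ _ (Ideal.subset_span (by simp)))

lemma X_one_mul_rename_mem_conicIdeal {f : MvPolynomial (Fin 2) R}
    (hf : f ∈ Ideal.span {X 0 ^ (a - 1), X 1 ^ (c - 1)}) :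
    X 1 * rename ![0, 2] f ∈ conicIdeal R a c := by
  obtain ⟨α, β, rfl⟩ := Ideal.mem_span_pair.mp hf
  rw [show X 1 * rename ![0, 2] (α * X 0 ^ (a - 1) + β * X 1 ^ (c - 1)) =
      rename (![0, 2] : Fin 2 → Fin 3) α * (X 0 ^ (a - 1) * X 1) +
        rename (![0, 2] : Fin 2 → Fin 3) β * (X 1 * X 2 ^ (c - 1)) by
    simp only [map_add, map_mul, map_pow, rename_X, Matrix.cons_val_zero, Matrix.cons_val_one,
      Matrix.cons_val_fin_one]
    ring]
  exact add_mem (Ideal.mul_mem_left _ _ (Ideal.subset_span (by simp)))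
    (Ideal.mul_mem_left _ _ (Ideal.subset_span (by simp)))

lemma span_conic_le_conicIdeal : Ideal.span {X 1 ^ 2 - X 0 * X 2} ≤ conicIdeal R a c :=
  Ideal.span_le.mpr (Set.singleton_subset_iff.mpr (Ideal.subset_span (by simp)))

theorem mem_conicIdeal_iff {F : MvPolynomial (Fin 3) R} :
    F ∈ conicIdeal R a c ↔ veronese R F ∈ veroneseIdeal R a c := by
  refine ⟨fun h => conicIdeal_le_comap_veronese h, fun h => ?_⟩
  obtain ⟨f₀, f₁, hF⟩ := exists_sub_rename_add_X_one_mul_rename_mem F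
  have hφF : veronese R F = expand 2 f₀ + X 0 * X 1 * expand 2 f₁ := by
    obtain ⟨g, hg⟩ := Ideal.mem_span_singleton'.mp hF
    have := congrArg (veronese R) hg
    rw [map_mul, veronese_X_one_sq_sub, mul_zero, map_sub, eq_comm, sub_eq_zero] at this
    rw [this, map_add, map_mul, veronese_rename, veronese_rename, veronese_X_one]
  rw [hφF, mem_veroneseIdeal_iff] at h
  have h₀ : f₀ ∈ Ideal.span {X 0 ^ a, X 1 ^ c} := by
    refine mem_span_X_zero_pow_X_one_pow_iff.mpr fun m hm => ?_
    have := h (2 • m) (by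
      rwa [MvPolynomial.mem_support_iff, coeff_two_smul_expand_add, ← MvPolynomial.mem_support_iff])
    simp only [Finsupp.smul_apply, smul_eq_mul] at this
    omega
  have h₁ : f₁ ∈ Ideal.span {X 0 ^ (a - 1), X 1 ^ (c - 1)} := by
    refine mem_span_X_zero_pow_X_one_pow_iff.mpr fun m hm => ?_
    have := h (single 0 1 + single 1 1 + 2 • m) (by
      rwa [MvPolynomial.mem_support_iff, coeff_add_two_smul_expand_add,
        ← MvPolynomial.mem_support_iff])
    simp only [Finsupp.add_apply, Finsupp.smul_apply, smul_eq_mul, single_eq_same, single_eq_of_ne,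
      ne_eq, one_ne_zero, zero_ne_one, not_false_eq_true] at this
    omega
  rw [← sub_add_cancel F (rename ![0, 2] f₀ + X 1 * rename ![0, 2] f₁)]
  exact add_mem (span_conic_le_conicIdeal hF)
    (add_mem (rename_mem_conicIdeal h₀) (X_one_mul_rename_mem_conicIdeal h₁))

lemma mem_veroneseIdeal_of_X_zero_sq_mul_mem {P : MvPolynomial (Fin 2) R} {d : ℕ}
    (hP : P.IsHomogeneous (2 * d)) (hd : d + 2 ≤ a) (h : X 0 ^ 2 * P ∈ veroneseIdeal R a c) :
    P ∈ veroneseIdeal R a c := by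
  rw [mem_veroneseIdeal_iff] at h ⊢
  intro n hn
  rw [MvPolynomial.mem_support_iff] at hn
  have hdeg : n 0 + n 1 = 2 * d := by
    simpa [Finsupp.weight_apply, Finsupp.sum_fintype, Fin.sum_univ_two] using hP hn
  have := h (single 0 2 + n) (by
    rwa [MvPolynomial.mem_support_iff, X_pow_eq_monomial, coeff_monomial_mul, one_mul])
  simp only [Finsupp.add_apply, single_eq_same, single_eq_of_ne, ne_eq, one_ne_zero,
    not_false_eq_true] at this
  omega

theorem mem_conicIdeal_of_X_zero_mul_mem {F : MvPolynomial (Fin 3) R} {d : ℕ}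
    (hF : F.IsHomogeneous d) (hd : d + 2 ≤ a) (h : X 0 * F ∈ conicIdeal R a c) :
    F ∈ conicIdeal R a c := by
  rw [mem_conicIdeal_iff] at h ⊢
  rw [map_mul, veronese_X_zero] at h
  refine mem_veroneseIdeal_of_X_zero_sq_mul_mem (hF.aeval _ fun i => ?_) hd h
  fin_cases i
  exacts [isHomogeneous_X_pow _ _, (isHomogeneous_X _ _).mul (isHomogeneous_X _ _),
    isHomogeneous_X_pow _ _]

lemma exists_X_pow_mul_X_pow_mul_X_pow_sub_X_zero_mul_mem (hac : c ≤ a) {p q r i : ℕ}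
    (hpqr : p + q + r = i + 1) (hi : a ≤ i + 1) :
    ∃ F : MvPolynomial (Fin 3) R, F.IsHomogeneous i ∧
      X 0 ^ p * X 1 ^ q * X 2 ^ r - X 0 * F ∈ conicIdeal R a c := by
  rcases p with _ | p
  · rcases q with _ | _ | q
    · refine ⟨0, isHomogeneous_zero _ _ _, ?_⟩
      simp only [pow_zero, one_mul, mul_zero, sub_zero]
      exact Ideal.mem_of_dvd _ (pow_dvd_pow (X 2) (show c ≤ r by omega))
        (Ideal.subset_span (by simp))
    · refine ⟨0, isHomogeneous_zero _ _ _, ?_⟩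
      simp only [pow_zero, zero_add, pow_one, one_mul, mul_zero, sub_zero]
      exact Ideal.mem_of_dvd _ (mul_dvd_mul_left _ (pow_dvd_pow (X 2) (show c - 1 ≤ r by omega)))
        (Ideal.subset_span (by simp))
    · refine ⟨X 1 ^ q * X 2 ^ (r + 1), (show q + (r + 1) = i by omega) ▸
        (isHomogeneous_X_pow 1 q).mul (isHomogeneous_X_pow 2 (r + 1)), ?_⟩
      rw [show X 0 ^ 0 * X 1 ^ (q + 2) * X 2 ^ r - X 0 * (X 1 ^ q * X 2 ^ (r + 1)) =
          X 1 ^ q * X 2 ^ r * (X 1 ^ 2 - X 0 * X 2 : MvPolynomial (Fin 3) R) by ring]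
      exact Ideal.mul_mem_left _ _ (Ideal.subset_span (by simp))
  · refine ⟨X 0 ^ p * X 1 ^ q * X 2 ^ r, (show p + q + r = i by omega) ▸
      ((isHomogeneous_X_pow 0 p).mul (isHomogeneous_X_pow 1 q)).mul (isHomogeneous_X_pow 2 r), ?_⟩
    rw [show (X 0 ^ (p + 1) * X 1 ^ q * X 2 ^ r - X 0 * (X 0 ^ p * X 1 ^ q * X 2 ^ r) :
        MvPolynomial (Fin 3) R) = 0 by ring]
    exact zero_mem _

theorem exists_isHomogeneous_sub_X_zero_mul_mem (hac : c ≤ a) {i : ℕ} (hi : a ≤ i + 1)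
    {G : MvPolynomial (Fin 3) R} (hG : G.IsHomogeneous (i + 1)) :
    ∃ F : MvPolynomial (Fin 3) R, F.IsHomogeneous i ∧ G - X 0 * F ∈ conicIdeal R a c := by
  induction hG using IsWeightedHomogeneous.induction_on with
  | zero => exact ⟨0, isHomogeneous_zero _ _ _, by simp⟩
  | add G₁ G₂ _ _ h₁ h₂ =>
    obtain ⟨F₁, hF₁, hm₁⟩ := h₁
    obtain ⟨F₂, hF₂, hm₂⟩ := h₂
    exact ⟨F₁ + F₂, hF₁.add hF₂, by convert add_mem hm₁ hm₂ using 1; ring⟩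
  | monomial d r hd =>
    have hdeg : d 0 + d 1 + d 2 = i + 1 := by
      simpa [Finsupp.weight_apply, Finsupp.sum_fintype, Fin.sum_univ_three] using hd
    obtain ⟨F, hF, hmem⟩ :=
      exists_X_pow_mul_X_pow_mul_X_pow_sub_X_zero_mul_mem (R := R) hac hdeg hi
    refine ⟨C r * F, hF.C_mul r, ?_⟩
    rw [monomial_eq, Finsupp.prod_fintype _ _ (by simp), Fin.prod_univ_three]
    convert Ideal.mul_mem_left _ (C r) hmem using 1
    ring

end Conic

section WLP

variable {K : Type*} [Field K] {a c : ℕ}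

lemma mk_X_zero_mul_injOn_grComponent {i : ℕ} (hi : i + 2 ≤ a) :
    ∀ u ∈ grComponent K (conicIdeal K a c) i, ∀ v ∈ grComponent K (conicIdeal K a c) i,
      Ideal.Quotient.mk _ (X 0) * u = Ideal.Quotient.mk _ (X 0) * v → u = v := by
  rintro _ ⟨F, hF, rfl⟩ _ ⟨G, hG, rfl⟩ h
  simp only [AlgHom.toLinearMap_apply, Ideal.Quotient.mkₐ_eq_mk, ← map_mul,
    Ideal.Quotient.eq] at h ⊢
  exact mem_conicIdeal_of_X_zero_mul_mem (hF.sub hG) hi (by rwa [mul_sub])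

lemma exists_mk_X_zero_mul_eq_of_mem_grComponent (hac : c ≤ a) {i : ℕ} (hi : a ≤ i + 1) :
    ∀ w ∈ grComponent K (conicIdeal K a c) (i + 1),
      ∃ u ∈ grComponent K (conicIdeal K a c) i, Ideal.Quotient.mk _ (X 0) * u = w := by
  rintro _ ⟨G, hG, rfl⟩
  obtain ⟨F, hF, hmem⟩ := exists_isHomogeneous_sub_X_zero_mul_mem hac hi hG
  refine ⟨Ideal.Quotient.mk _ F, ⟨F, hF, rfl⟩, ?_⟩
  rw [AlgHom.toLinearMap_apply, Ideal.Quotient.mkₐ_eq_mk, ← map_mul]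
  exact (Ideal.Quotient.eq.mpr hmem).symm

end WLP

theorem stmt_4_general (K : Type*) [Field K] (a c : ℕ) (hac : c ≤ a) :
    hasWLP K (Ideal.span {(X 0 : MvPolynomial (Fin 3) K) ^ a,
      X 1 ^ 2 - X 0 * X 2, X 2 ^ c,
      X 0 ^ (a - 1) * X 1, X 1 * X 2 ^ (c - 1)}) := by
  refine ⟨X 0, isHomogeneous_X _ _, fun i => ?_⟩
  rcases le_or_gt (i + 2) a with hi | hi
  · exact Or.inl (mk_X_zero_mul_injOn_grComponent hi)
  · exact Or.inr (exists_mk_X_zero_mul_eq_of_mem_grComponent hac (by omega))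

theorem stmt_4 (K : Type*) [Field K] [CharZero K] (a c : ℕ)
    (hc : 2 ≤ c) (hac : c ≤ a) :
    hasWLP K (Ideal.span {(X 0 : MvPolynomial (Fin 3) K) ^ a,
      X 1 ^ 2 - X 0 * X 2, X 2 ^ c,
      X 0 ^ (a - 1) * X 1, X 1 * X 2 ^ (c - 1)}) :=
  stmt_4_general K a c hac
end

section
/- Let K be a field of characteristic zero, R = K[x,y,z], and let a ≥ b ≥ 2 and 1 ≤ β ≤ b−1 be integers. Let A_β = R/I_β where I_β = (x^a, y^b − x^{b−1} z, z^2, x^{a−b+1} y^{b−β}, y^{b−β} z), and set k = ⌊(a+b−β−1)/2⌋. Then h_{A_β}(k) = 2b − β if β ≤ a−b, and h_{A_β}(k) = a + b − 2β + 1 if β ≥ a−b+1. Moreover, if 1 ≤ β ≤ a−b−1, then h_{A_β}(k) = h_{A_β}(k−1). -/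
open MvPolynomial

/-
Modulo `I`, the binomial generator lets one trade `y ^ b` for `x ^ (b - 1) * z`; after one such
trade every monomial either lies in the ideal generated by the four monomial generators or is
*standard*: `x^i y^j` with `i < a`, `j < b` and (`j + β < b` or `i + b ≤ a`), or `x^i y^j z` with
`i < a`, `j + β < b`. So the standard monomials of degree `k` span `[A]_k`. They are independent
because the normal-form map `R → K^(ℕ³)`, sending a monomial to the basis vector of its reduction
(or to `0`), kills `I`. Counting standard monomials by their `y`-exponent gives
`h_A(k) = (min (b-β) (k+1) - (k+1-a)) + (min b (k+1) - max (b-β) (k+b-a)) + (min (b-β) k - (k-a))`,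
and the three claims are arithmetic consequences of this formula.
-/

theorem Ideal.Quotient.linearIndependent_mk_of_comp {K A V ι : Type*} [CommRing K] [CommRing A]
    [Algebra K A] [AddCommGroup V] [Module K V] (I : Ideal A) (φ : A →ₗ[K] V)
    (hφ : ∀ p ∈ I, φ p = 0) {v : ι → A} (hv : LinearIndependent K (φ ∘ v)) :
    LinearIndependent K (Ideal.Quotient.mk I ∘ v) :=
  hv.of_comp ((I.restrictScalars K).liftQ φ hφ ∘ₗ
    (Submodule.Quotient.restrictScalarsEquiv K I).symm.toLinearMap)

theorem MvPolynomial.map_eq_zero_of_mem_ideal_span {σ K V : Type*} [CommRing K]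
    [AddCommGroup V] [Module K V] (φ : MvPolynomial σ K →ₗ[K] V) {G : Set (MvPolynomial σ K)}
    (hG : ∀ g ∈ G, ∀ d, φ (monomial d 1 * g) = 0) {p : MvPolynomial σ K}
    (hp : p ∈ Ideal.span G) : φ p = 0 := by
  have hmul : ∀ g ∈ G, ∀ q, φ (q * g) = 0 := fun g hg q => by
    induction q using MvPolynomial.induction_on' with
    | monomial d c =>
      rw [← mul_one c, ← smul_eq_mul (b := (1 : K)), ← smul_monomial, smul_mul_assoc, map_smul,
        hG g hg d, smul_zero]
    | add q r hq hr => rw [add_mul, map_add, hq, hr, add_zero]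
  suffices ∀ q, φ (q * p) = 0 by simpa using this 1
  induction hp using Submodule.span_induction with
  | mem g hg => exact hmul g hg
  | zero => simp
  | add x y _ _ hx hy => intro q; rw [mul_add, map_add, hx, hy, add_zero]
  | smul r x _ hx => intro q; rw [smul_eq_mul, ← mul_assoc, hx]

theorem grComponent_eq_span (K : Type*) [Field K] (I : Ideal (MvPolynomial (Fin 3) K)) (k : ℕ) :
    grComponent K I k =
      Submodule.span K ((fun d => Ideal.Quotient.mk I (monomial d 1)) '' {d | d.degree = k}) := by
  rw [grComponent, homogeneousSubmodule_eq_finsupp_supported,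
    AddMonoidAlgebra.supported_eq_span_single, Submodule.map_span, Set.image_image]
  rfl

namespace IdealBeta

noncomputable section

variable (K : Type*) [Field K]

def mono (t : ℕ × ℕ × ℕ) : MvPolynomial (Fin 3) K := X 0 ^ t.1 * X 1 ^ t.2.1 * X 2 ^ t.2.2

def deg (t : ℕ × ℕ × ℕ) : ℕ := t.1 + t.2.1 + t.2.2

lemma mono_add (s t : ℕ × ℕ × ℕ) : mono K (s + t) = mono K s * mono K t := by
  simp only [mono, Prod.fst_add, Prod.snd_add, pow_add]
  ring

lemma monomial_one_eq_mono (d : Fin 3 →₀ ℕ) : monomial d (1 : K) = mono K (d 0, d 1, d 2) := by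
  rw [monomial_eq, C_1, one_mul, Finsupp.prod_fintype _ _ (fun _ => pow_zero _),
    Fin.prod_univ_three, mono]

lemma isHomogeneous_mono (t : ℕ × ℕ × ℕ) : (mono K t).IsHomogeneous (deg t) :=
  ((isHomogeneous_X_pow _ _).mul (isHomogeneous_X_pow _ _)).mul (isHomogeneous_X_pow _ _)

def ideal (a b β : ℕ) : Ideal (MvPolynomial (Fin 3) K) :=
  Ideal.span {(X 0 : MvPolynomial (Fin 3) K) ^ a,
      X 1 ^ b - X 0 ^ (b - 1) * X 2, X 2 ^ 2,
      X 0 ^ (a - b + 1) * X 1 ^ (b - β), X 1 ^ (b - β) * X 2}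

def monomialGenExps (a b β : ℕ) : Set (ℕ × ℕ × ℕ) :=
  {(a, 0, 0), (0, 0, 2), (a - b + 1, b - β, 0), (0, b - β, 1)}

lemma ideal_eq_span_mono (a b β : ℕ) :
    ideal K a b β = Ideal.span (insert (mono K (0, b, 0) - mono K (b - 1, 0, 1))
      (mono K '' monomialGenExps a b β)) := by
  rw [ideal, Set.insert_comm]
  simp [mono, monomialGenExps, Set.image_insert_eq]

def IsStandard (a b β : ℕ) : ℕ × ℕ × ℕ → Prop
  | (i, j, e) => i < a ∧ (e = 0 ∧ j < b ∧ (j + β < b ∨ i + b ≤ a) ∨ e = 1 ∧ j + β < b)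

def reduceY (b : ℕ) : ℕ × ℕ × ℕ → ℕ × ℕ × ℕ
  | (i, j, e) => if e = 0 ∧ b ≤ j then (i + (b - 1), j - b, 1) else (i, j, e)

open Classical in
def normalForm (a b β : ℕ) (t : ℕ × ℕ × ℕ) : (ℕ × ℕ × ℕ) →₀ K :=
  if IsStandard a b β (reduceY b t) then Finsupp.single (reduceY b t) 1 else 0

def normalFormMap (a b β : ℕ) : MvPolynomial (Fin 3) K →ₗ[K] (ℕ × ℕ × ℕ) →₀ K :=
  (basisMonomials (Fin 3) K).constr K fun d => normalForm K a b β (d 0, d 1, d 2)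

lemma normalFormMap_mono (a b β : ℕ) (t : ℕ × ℕ × ℕ) :
    normalFormMap K a b β (mono K t) = normalForm K a b β t := by
  set d : Fin 3 →₀ ℕ := Finsupp.equivFunOnFinite.symm ![t.1, t.2.1, t.2.2]
  have hd : (d 0, d 1, d 2) = t := by simp [d]
  rw [← hd, ← monomial_one_eq_mono, normalFormMap, ← congrFun (coe_basisMonomials _ _) d,
    Module.Basis.constr_basis]

variable {K} {a b β : ℕ}

lemma deg_reduceY (hb : 1 ≤ b) (t : ℕ × ℕ × ℕ) : deg (reduceY b t) = deg t := by
  obtain ⟨i, j, e⟩ := t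
  rw [reduceY]
  split
  · simp only [deg]; omega
  · rfl

lemma reduceY_of_isStandard {t : ℕ × ℕ × ℕ} (ht : IsStandard a b β t) : reduceY b t = t := by
  obtain ⟨i, j, e⟩ := t
  simp only [IsStandard] at ht
  rw [reduceY, if_neg (by omega)]

lemma not_reducible_reduceY (t : ℕ × ℕ × ℕ) :
    ¬((reduceY b t).2.2 = 0 ∧ b ≤ (reduceY b t).2.1) := by
  obtain ⟨i, j, e⟩ := t
  rw [reduceY]
  split <;> simp_all

lemma normalForm_of_isStandard {t : ℕ × ℕ × ℕ} (ht : IsStandard a b β t) :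
    normalForm K a b β t = Finsupp.single t 1 := by
  rw [normalForm, reduceY_of_isStandard ht, if_pos ht]

lemma normalForm_add_eq_zero (hba : b ≤ a) (t : ℕ × ℕ × ℕ) {s : ℕ × ℕ × ℕ}
    (hs : s ∈ monomialGenExps a b β) : normalForm K a b β (t + s) = 0 := by
  obtain ⟨i, j, e⟩ := t
  simp only [monomialGenExps, Set.mem_insert_iff, Set.mem_singleton_iff] at hs
  rw [normalForm, if_neg]
  rcases hs with rfl | rfl | rfl | rfl <;>
    simp only [Prod.mk_add_mk] <;> rw [reduceY] <;> split <;> unfold IsStandard <;> omega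

lemma normalForm_add_Y (hb : 1 ≤ b) (t : ℕ × ℕ × ℕ) :
    normalForm K a b β (t + (0, b, 0)) = normalForm K a b β (t + (b - 1, 0, 1)) := by
  obtain ⟨i, j, e⟩ := t
  simp only [Prod.mk_add_mk, add_zero]
  rcases Nat.eq_zero_or_pos e with rfl | he
  · have h : reduceY b (i, j + b, 0) = reduceY b (i + (b - 1), j, 0 + 1) := by simp [reduceY]
    rw [normalForm, normalForm, h]
  · rw [normalForm, normalForm, if_neg, if_neg] <;> rw [reduceY] <;> split <;>
      unfold IsStandard <;> omega

lemma normalFormMap_eq_zero_of_mem (hb : 1 ≤ b) (hba : b ≤ a) {p : MvPolynomial (Fin 3) K}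
    (hp : p ∈ ideal K a b β) : normalFormMap K a b β p = 0 := by
  rw [ideal_eq_span_mono] at hp
  refine map_eq_zero_of_mem_ideal_span _ (fun g hg d => ?_) hp
  rw [monomial_one_eq_mono]
  rcases hg with rfl | ⟨s, hs, rfl⟩
  · rw [mul_sub, map_sub, ← mono_add, ← mono_add, normalFormMap_mono, normalFormMap_mono,
      normalForm_add_Y hb, sub_self]
  · rw [← mono_add, normalFormMap_mono, normalForm_add_eq_zero hba _ hs]

lemma mk_mono_eq_mk_mono_reduceY (t : ℕ × ℕ × ℕ) :
    Ideal.Quotient.mk (ideal K a b β) (mono K t) =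
      Ideal.Quotient.mk (ideal K a b β) (mono K (reduceY b t)) := by
  obtain ⟨i, j, e⟩ := t
  rw [reduceY]
  split
  case isFalse => rfl
  case isTrue h =>
    obtain ⟨rfl, j, rfl⟩ : e = 0 ∧ ∃ j', j = j' + b := ⟨h.1, j - b, by omega⟩
    rw [Ideal.Quotient.mk_eq_mk_iff_sub_mem, Nat.add_sub_cancel,
      show (i, j + b, 0) = (i, j, 0) + (0, b, 0) by simp,
      show (i + (b - 1), j, 1) = (i, j, 0) + (b - 1, 0, 1) by simp,
      mono_add, mono_add, ← mul_sub, ideal_eq_span_mono]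
    exact Ideal.mul_mem_left _ _ (Ideal.subset_span (Set.mem_insert _ _))

lemma mono_mem_ideal_of_not_isStandard (hba : b ≤ a) {t : ℕ × ℕ × ℕ}
    (hY : ¬(t.2.2 = 0 ∧ b ≤ t.2.1)) (ht : ¬IsStandard a b β t) : mono K t ∈ ideal K a b β := by
  obtain ⟨i, j, e⟩ := t
  obtain ⟨t, s, hs, hts⟩ : ∃ t s, s ∈ monomialGenExps a b β ∧ (i, j, e) = t + s := by
    simp only [IsStandard] at ht hY
    by_cases hi : a ≤ i
    · exact ⟨(i - a, j, e), (a, 0, 0), by simp [monomialGenExps], by simp; omega⟩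
    by_cases he : 2 ≤ e
    · exact ⟨(i, j, e - 2), (0, 0, 2), by simp [monomialGenExps], by simp; omega⟩
    by_cases he1 : e = 1
    · exact ⟨(i, j - (b - β), 0), (0, b - β, 1), by simp [monomialGenExps], by simp; omega⟩
    · exact ⟨(i - (a - b + 1), j - (b - β), 0), (a - b + 1, b - β, 0),
        by simp [monomialGenExps], by simp; omega⟩
  rw [hts, mono_add, ideal_eq_span_mono]
  exact Ideal.mul_mem_left _ _ (Ideal.subset_span (Set.mem_insert_of_mem _ ⟨s, hs, rfl⟩))

/-- Indexed by the `y`-exponent `j`; the interval bounds encode `i < a` (resp. `i + b ≤ a` in the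
middle family) for `i = k - j`, resp. `i = k - 1 - j`. -/
def standardSet (a b β k : ℕ) : Finset (ℕ × ℕ × ℕ) :=
  ((Finset.Ico (k + 1 - a) (min (b - β) (k + 1))).image fun j => (k - j, j, 0)) ∪
  ((Finset.Ico (max (b - β) (k + b - a)) (min b (k + 1))).image fun j => (k - j, j, 0)) ∪
  ((Finset.Ico (k - a) (min (b - β) k)).image fun j => (k - 1 - j, j, 1))

lemma mem_standardSet {k : ℕ} {t : ℕ × ℕ × ℕ} :
    t ∈ standardSet a b β k ↔ deg t = k ∧ IsStandard a b β t := by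
  obtain ⟨i, j, e⟩ := t
  simp only [standardSet, Finset.mem_union, Finset.mem_image, Finset.mem_Ico, Prod.mk.injEq, deg,
    IsStandard]
  constructor
  · rintro ((⟨j, hj, rfl, rfl, rfl⟩ | ⟨j, hj, rfl, rfl, rfl⟩) | ⟨j, hj, rfl, rfl, rfl⟩) <;> omega
  · rintro ⟨rfl, hi, ⟨rfl, hj, hβ⟩ | ⟨rfl, hj⟩⟩
    · by_cases hjβ : j + β < b
      · exact Or.inl (Or.inl ⟨j, by omega, by omega, rfl, rfl⟩)
      · exact Or.inl (Or.inr ⟨j, by omega, by omega, rfl, rfl⟩)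
    · exact Or.inr ⟨j, by omega, by omega, rfl, rfl⟩

lemma card_standardSet (a b β k : ℕ) :
    (standardSet a b β k).card = (min (b - β) (k + 1) - (k + 1 - a)) +
      (min b (k + 1) - max (b - β) (k + b - a)) + (min (b - β) k - (k - a)) := by
  have hinj : ∀ (f : ℕ → ℕ) (e : ℕ), Function.Injective fun j => (f j, j, e) :=
    fun _ _ _ _ h => congrArg (fun t : ℕ × ℕ × ℕ => t.2.1) h
  rw [standardSet, Finset.card_union_of_disjoint, Finset.card_union_of_disjoint,
    Finset.card_image_of_injective _ (hinj _ 0), Finset.card_image_of_injective _ (hinj _ 0),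
    Finset.card_image_of_injective _ (hinj _ 1), Nat.card_Ico, Nat.card_Ico, Nat.card_Ico]
  · refine Finset.disjoint_left.2 fun t h₁ h₂ => ?_
    simp only [Finset.mem_image, Finset.mem_Ico] at h₁ h₂
    obtain ⟨j, hj, rfl⟩ := h₂
    obtain ⟨j', hj', h⟩ := h₁
    simp only [Prod.mk.injEq] at h
    omega
  · refine Finset.disjoint_left.2 fun t h₁ h₂ => ?_
    simp only [Finset.mem_union, Finset.mem_image] at h₁ h₂
    obtain ⟨j, -, rfl⟩ := h₂
    rcases h₁ with ⟨j', -, h⟩ | ⟨j', -, h⟩ <;> simp at h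

lemma mk_mono_mem_span (hb : 1 ≤ b) (hba : b ≤ a) (t : ℕ × ℕ × ℕ) :
    Ideal.Quotient.mk (ideal K a b β) (mono K t) ∈ Submodule.span K
      ((fun s => Ideal.Quotient.mk (ideal K a b β) (mono K s)) '' standardSet a b β (deg t)) := by
  rw [mk_mono_eq_mk_mono_reduceY]
  by_cases ht : IsStandard a b β (reduceY b t)
  · exact Submodule.subset_span ⟨_, mem_standardSet.2 ⟨deg_reduceY hb t, ht⟩, rfl⟩
  · rw [Ideal.Quotient.eq_zero_iff_mem.2
      (mono_mem_ideal_of_not_isStandard hba (not_reducible_reduceY t) ht)]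
    exact Submodule.zero_mem _

lemma grComponent_ideal_eq_span (hb : 1 ≤ b) (hba : b ≤ a) (k : ℕ) :
    grComponent K (ideal K a b β) k = Submodule.span K
      ((fun t => Ideal.Quotient.mk (ideal K a b β) (mono K t)) '' standardSet a b β k) := by
  apply le_antisymm
  · rw [grComponent_eq_span, Submodule.span_le]
    rintro _ ⟨d, hd, rfl⟩
    have hdeg : deg (d 0, d 1, d 2) = k := by
      rw [← hd, Finsupp.degree_eq_sum, Fin.sum_univ_three]; rfl
    simp only [monomial_one_eq_mono, ← hdeg]
    exact mk_mono_mem_span hb hba _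
  · rw [Submodule.span_le]
    rintro _ ⟨t, ht, rfl⟩
    exact ⟨mono K t, (mem_standardSet.1 ht).1 ▸ isHomogeneous_mono K t, rfl⟩

lemma linearIndependent_mk_mono (hb : 1 ≤ b) (hba : b ≤ a) (k : ℕ) :
    LinearIndependent K
      (fun t : standardSet a b β k => Ideal.Quotient.mk (ideal K a b β) (mono K t)) := by
  refine Ideal.Quotient.linearIndependent_mk_of_comp _ (normalFormMap K a b β)
    (fun p hp => normalFormMap_eq_zero_of_mem hb hba hp) ?_
  have hsingle : normalFormMap K a b β ∘ (fun t : standardSet a b β k => mono K t) =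
      fun t => Finsupp.single t.1 1 := funext fun t => by
    rw [Function.comp_apply, normalFormMap_mono,
      normalForm_of_isStandard (mem_standardSet.1 t.2).2]
  rw [hsingle]
  exact (Finsupp.linearIndependent_single_one K _).comp _ Subtype.val_injective

theorem hilb_ideal (hb : 1 ≤ b) (hba : b ≤ a) (k : ℕ) :
    hilb K (ideal K a b β) k = (min (b - β) (k + 1) - (k + 1 - a)) +
      (min b (k + 1) - max (b - β) (k + b - a)) + (min (b - β) k - (k - a)) := by
  rw [hilb, grComponent_ideal_eq_span hb hba, Set.image_eq_range, ← card_standardSet]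
  exact (finrank_span_eq_card (linearIndependent_mk_mono hb hba k)).trans (Fintype.card_coe _)

end

end IdealBeta

theorem stmt_5_general (K : Type*) [Field K] (a b β : ℕ)
    (hab : b ≤ a) (hβ1 : 1 ≤ β) (hβ2 : β ≤ b - 1) :
    let I : Ideal (MvPolynomial (Fin 3) K) := Ideal.span {(X 0 : MvPolynomial (Fin 3) K) ^ a,
      X 1 ^ b - X 0 ^ (b - 1) * X 2, X 2 ^ 2,
      X 0 ^ (a - b + 1) * X 1 ^ (b - β), X 1 ^ (b - β) * X 2}
    let k : ℕ := (a + b - β - 1) / 2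
    (((β : ℤ) ≤ (a : ℤ) - b → (hilb K I k : ℤ) = 2 * b - β) ∧
     ((a : ℤ) - b + 1 ≤ (β : ℤ) → (hilb K I k : ℤ) = a + b - 2 * β + 1) ∧
     ((β : ℤ) ≤ (a : ℤ) - b - 1 → hilb K I k = hilb K I (k - 1))) := by
  intro I k
  have hilb_eq (m : ℕ) : hilb K I m = _ := IdealBeta.hilb_ideal (β := β) (by omega) hab m
  refine ⟨fun h => ?_, fun h => ?_, fun h => ?_⟩ <;> simp only [hilb_eq, k] <;> omega

theorem stmt_5 (K : Type*) [Field K] [CharZero K] (a b β : ℕ)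
    (hb : 2 ≤ b) (hab : b ≤ a) (hβ1 : 1 ≤ β) (hβ2 : β ≤ b - 1) :
    let I : Ideal (MvPolynomial (Fin 3) K) := Ideal.span {(X 0 : MvPolynomial (Fin 3) K) ^ a,
      X 1 ^ b - X 0 ^ (b - 1) * X 2, X 2 ^ 2,
      X 0 ^ (a - b + 1) * X 1 ^ (b - β), X 1 ^ (b - β) * X 2}
    let k : ℕ := (a + b - β - 1) / 2
    (((β : ℤ) ≤ (a : ℤ) - b → (hilb K I k : ℤ) = 2 * b - β) ∧
     ((a : ℤ) - b + 1 ≤ (β : ℤ) → (hilb K I k : ℤ) = a + b - 2 * β + 1) ∧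
     ((β : ℤ) ≤ (a : ℤ) - b - 1 → hilb K I k = hilb K I (k - 1))) :=
  stmt_5_general K a b β hab hβ1 hβ2
end

section
/- Let K be a field of characteristic zero, R = K[x,y,z], and let a ≥ b ≥ 2 be integers. Let G = R/(x^a, y^b − x^{b−1} z, z^2) and set k = ⌊(a+b−1)/2⌋. Then h_G(k) = 2b if a ≥ b+1, and h_G(k) = 2b−1 if a = b. Moreover, if a ≥ b+3, then h_G(k) = h_G(k−1). -/
/-!
The monomials `x^i y^j z^e` with `i < a`, `j < b`, `e < 2` form a basis of `R/I`. They span,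
since `y^b ≡ x^(b-1) z`, `z^2 ≡ 0` and `x^a ≡ 0` rewrite every monomial into them. They are
independent: the substitution `z ↦ x^(1-b) y^b` into `K[x^±1, y]` kills `y^b - x^(b-1) z`, sends
them to distinct monomials, and sends `I` into `x^a S + x^(2-2b) y^(2b) S` with
`S = K[x, y, x^(1-b) y^b]`, which contains none of those monomials.

Hence `h(d) = N(d) + N(d-1)`, where `N(c)` counts the `(i, j) ∈ [0,a) × [0,b)` with `i + j = c`:
`N(c) = b` for `b - 1 ≤ c < a` and `N(c) = c + 1` for `c < min a b`.
-/

open MvPolynomial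

section

open Finset

variable {K : Type*} [Field K]

variable (K) in
noncomputable def xyzMon (t : ℕ × ℕ × ℕ) : MvPolynomial (Fin 3) K :=
  X 0 ^ t.1 * X 1 ^ t.2.1 * X 2 ^ t.2.2

lemma monomial_eq_smul_xyzMon (m : Fin 3 →₀ ℕ) (r : K) :
    monomial m r = r • xyzMon K (m 0, m 1, m 2) := by
  rw [monomial_eq, Finsupp.prod_fintype _ _ fun _ => pow_zero _, Fin.prod_univ_three,
    smul_eq_C_mul, xyzMon]

lemma isHomogeneous_xyzMon (t : ℕ × ℕ × ℕ) :
    (xyzMon K t).IsHomogeneous (t.1 + t.2.1 + t.2.2) :=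
  ((isHomogeneous_X_pow _ _).mul (isHomogeneous_X_pow _ _)).mul (isHomogeneous_X_pow _ _)

variable (K) in
noncomputable def ciIdeal (a b : ℕ) : Ideal (MvPolynomial (Fin 3) K) :=
  Ideal.span {X 0 ^ a, X 1 ^ b - X 0 ^ (b - 1) * X 2, X 2 ^ 2}

def stdExps (a b d : ℕ) : Finset (ℕ × ℕ × ℕ) :=
  (range a ×ˢ range b ×ˢ range 2).filter fun t => t.1 + t.2.1 + t.2.2 = d

@[simp]
lemma mem_stdExps {a b d i j e : ℕ} :
    (i, j, e) ∈ stdExps a b d ↔ i < a ∧ j < b ∧ e < 2 ∧ i + j + e = d := by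
  simp [stdExps, and_assoc]

section Spanning

variable {a b : ℕ}

local notation "mkI" => Ideal.Quotient.mkₐ K (ciIdeal K a b)

lemma mk_xyzMon_eq_zero_of_le_left {i j e : ℕ} (h : a ≤ i) : mkI (xyzMon K (i, j, e)) = 0 := by
  obtain ⟨i, rfl⟩ := Nat.exists_eq_add_of_le h
  rw [Ideal.Quotient.mkₐ_eq_mk, Ideal.Quotient.eq_zero_iff_mem, xyzMon, pow_add]
  exact Ideal.mul_mem_right _ _ (Ideal.mul_mem_right _ _
    (Ideal.mul_mem_right _ _ (Ideal.subset_span (by simp))))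

lemma mk_xyzMon_eq_zero_of_two_le {i j e : ℕ} (h : 2 ≤ e) : mkI (xyzMon K (i, j, e)) = 0 := by
  obtain ⟨e, rfl⟩ := Nat.exists_eq_add_of_le h
  rw [Ideal.Quotient.mkₐ_eq_mk, Ideal.Quotient.eq_zero_iff_mem, xyzMon, pow_add]
  exact Ideal.mul_mem_left _ _ (Ideal.mul_mem_right _ _ (Ideal.subset_span (by simp)))

lemma mk_xyzMon_eq_of_le_middle {i j e : ℕ} (h : b ≤ j) :
    mkI (xyzMon K (i, j, e)) = mkI (xyzMon K (i + (b - 1), j - b, e + 1)) := by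
  obtain ⟨j, rfl⟩ := Nat.exists_eq_add_of_le' h
  rw [Ideal.Quotient.mkₐ_eq_mk, Ideal.Quotient.eq, xyzMon, xyzMon, Nat.add_sub_cancel]
  convert Ideal.mul_mem_left (ciIdeal K a b) (X 0 ^ i * X 1 ^ j * X 2 ^ e)
    (Ideal.subset_span (by simp) : X 1 ^ b - X 0 ^ (b - 1) * X 2 ∈ ciIdeal K a b) using 1
  ring

lemma mk_xyzMon_mem_span_stdExps (hb : 0 < b) {i j e d : ℕ} (hd : i + j + e = d) :
    mkI (xyzMon K (i, j, e)) ∈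
      Submodule.span K (Set.range fun t : stdExps a b d => mkI (xyzMon K t)) := by
  induction j using Nat.strong_induction_on generalizing i e with
  | _ j ih =>
    by_cases hj : b ≤ j
    · rw [mk_xyzMon_eq_of_le_middle hj]
      exact ih (j - b) (by omega) (by omega)
    by_cases he : 2 ≤ e
    · simp [mk_xyzMon_eq_zero_of_two_le he]
    by_cases hi : a ≤ i
    · simp [mk_xyzMon_eq_zero_of_le_left hi]
    exact Submodule.subset_span
      ⟨⟨(i, j, e), mem_stdExps.mpr ⟨by omega, by omega, by omega, hd⟩⟩, rfl⟩

lemma grComponent_ciIdeal_eq_span (hb : 0 < b) (d : ℕ) :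
    grComponent K (ciIdeal K a b) d =
      Submodule.span K (Set.range fun t : stdExps a b d => mkI (xyzMon K t)) := by
  apply le_antisymm
  · rintro _ ⟨p, hp, rfl⟩
    rw [← support_sum_monomial_coeff p, AlgHom.toLinearMap_apply, map_sum]
    refine Submodule.sum_mem _ fun m hm => ?_
    have hdeg := hp.degree_eq_sum_deg_support hm
    rw [← Finsupp.degree_apply, Finsupp.degree_eq_sum, Fin.sum_univ_three] at hdeg
    rw [monomial_eq_smul_xyzMon, map_smul]
    exact Submodule.smul_mem _ _ (mk_xyzMon_mem_span_stdExps hb (by omega))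
  · rw [Submodule.span_le]
    rintro _ ⟨t, rfl⟩
    obtain ⟨⟨i, j, e⟩, ht⟩ := t
    exact ⟨xyzMon K (i, j, e),
      (mem_stdExps.mp ht).2.2.2 ▸ isHomogeneous_xyzMon (i, j, e), rfl⟩

end Spanning

section Independence

open AddMonoidAlgebra

variable (K) in
/-- The substitution `z ↦ x^(1-b) y^b` into `K[x^±1, y]`; it kills `y^b - x^(b-1) z`. -/
noncomputable def laurentSubst (b : ℕ) :
    MvPolynomial (Fin 3) K →ₐ[K] AddMonoidAlgebra K (ℤ × ℕ) :=
  aeval ![single (1, 0) 1, single (0, 1) 1, single (1 - b, b) 1]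

def substExp (b : ℕ) (t : ℕ × ℕ × ℕ) : ℤ × ℕ :=
  (t.1 + t.2.2 * (1 - b), t.2.1 + t.2.2 * b)

/-- The exponents of the monomials of `K[x, y, x^(1-b) y^b]`. -/
def substMonoid (b : ℕ) : AddSubmonoid (ℤ × ℕ) where
  carrier := {s | ∃ e : ℕ, e * b ≤ s.2 ∧ (1 - b : ℤ) * e ≤ s.1}
  add_mem' := by
    rintro s t ⟨e, he₂, he₁⟩ ⟨f, hf₂, hf₁⟩
    refine ⟨e + f, ?_, ?_⟩
    · simpa [add_mul] using add_le_add he₂ hf₂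
    · simpa [mul_add] using add_le_add he₁ hf₁
  zero_mem' := ⟨0, by simp, by simp⟩

lemma substExp_mem_substMonoid (b : ℕ) (t : ℕ × ℕ × ℕ) : substExp b t ∈ substMonoid b :=
  ⟨t.2.2, by simp [substExp], by simp [substExp]; ring_nf; omega⟩

lemma laurentSubst_xyzMon (b : ℕ) (t : ℕ × ℕ × ℕ) :
    laurentSubst K b (xyzMon K t) = single (substExp b t) 1 := by
  simp only [xyzMon, laurentSubst, map_mul, map_pow, aeval_X, Matrix.cons_val_zero,
    Matrix.cons_val_one, Matrix.cons_val_two, Matrix.head_cons, Matrix.tail_cons, single_pow,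
    single_mul_single, one_pow, mul_one, substExp]
  congr 1
  ext <;> simp

lemma support_laurentSubst_subset (b : ℕ) (p : MvPolynomial (Fin 3) K) :
    ↑(laurentSubst K b p).coeff.support ⊆ (substMonoid b : Set (ℤ × ℕ)) := by
  induction p using MvPolynomial.induction_on' with
  | monomial m r =>
    rw [monomial_eq_smul_xyzMon, map_smul, laurentSubst_xyzMon, smul_single, smul_eq_mul,
      mul_one, coeff_single]
    exact (Finset.coe_subset.mpr Finsupp.support_single_subset).trans
      (by simp [substExp_mem_substMonoid])
  | add p q hp hq =>
    rw [map_add, AddMonoidAlgebra.coeff_add]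
    exact (Finset.coe_subset.mpr Finsupp.support_add).trans (by simpa using ⟨hp, hq⟩)

lemma laurentSubst_y_pow_sub_x_pow_mul_z {b : ℕ} (hb : 0 < b) :
    laurentSubst K b (X 1 ^ b - X 0 ^ (b - 1) * X 2) = 0 := by
  simp only [laurentSubst, map_sub, map_mul, map_pow, aeval_X, Matrix.cons_val_zero,
    Matrix.cons_val_one, Matrix.cons_val_two, Matrix.head_cons, Matrix.tail_cons, single_pow,
    single_mul_single, one_pow, mul_one, sub_eq_zero]
  congr 1
  ext <;> simp [hb]

lemma substExp_injOn (b : ℕ) : Set.InjOn (substExp b) {t | t.2.1 < b ∧ t.2.2 < 2} := by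
  rintro ⟨i, j, e⟩ ⟨hj, he⟩ ⟨i', j', e'⟩ ⟨hj', he'⟩ h
  simp only [substExp, Prod.mk.injEq] at h hj he hj' he' ⊢
  obtain ⟨h₁, h₂⟩ := h
  interval_cases e <;> interval_cases e' <;> omega

/-- The power of `y` forces `e` factors `x^(1-b) y^b`, which leave too small a power of `x`. -/
lemma substExp_sub_notMem_substMonoid {a b i j e : ℕ} (hi : i < a) (hj : j < b) (he : e < 2) :
    substExp b (i, j, e) - ((a : ℤ), 0) ∉ substMonoid b := by
  rintro ⟨e', he'₂, he'₁⟩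
  simp only [substExp, Prod.fst_sub, Prod.snd_sub, Nat.sub_zero] at he'₁ he'₂
  have : e' ≤ e := by
    by_contra! h
    nlinarith
  interval_cases e <;> interval_cases e' <;> omega

lemma coeff_laurentSubst_eq_zero_of_mem_ciIdeal {a b : ℕ} (hb : 0 < b)
    {p : MvPolynomial (Fin 3) K} (hp : p ∈ ciIdeal K a b) {i j e : ℕ}
    (hi : i < a) (hj : j < b) (he : e < 2) :
    (laurentSubst K b p).coeff (substExp b (i, j, e)) = 0 := by
  obtain ⟨f, q, hq, rfl⟩ := Ideal.mem_span_insert.mp hp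
  obtain ⟨-, g, rfl⟩ := Ideal.mem_span_pair.mp hq
  have hx : laurentSubst K b (X 0 ^ a) = single ((a : ℤ), 0) 1 := by
    simp [laurentSubst, single_pow]
  have hz : laurentSubst K b (X 2 ^ 2) = single (2 * (1 - b : ℤ), 2 * b) 1 := by
    simp [laurentSubst, single_pow]
  simp only [map_add, map_mul, laurentSubst_y_pow_sub_x_pow_mul_z hb, hx, hz, mul_zero, zero_add,
    AddMonoidAlgebra.coeff_add, Finsupp.add_apply]
  rw [coeff_mul_single_eq_coeff_mul (substExp b (i, j, e) - ((a : ℤ), 0)), mul_one,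
    coeff_mul_single_of_forall_add_ne, add_zero]
  · exact Finsupp.notMem_support_iff.mp fun h =>
      substExp_sub_notMem_substMonoid hi hj he (support_laurentSubst_subset b f h)
  · intro s h
    have := congrArg Prod.snd h
    simp only [substExp, Prod.snd_add] at this
    interval_cases e <;> omega
  · intro s _
    simp only [substExp, Prod.ext_iff, Prod.fst_add, Prod.snd_add, Prod.fst_sub, Prod.snd_sub]
    omega

lemma linearIndependent_mk_xyzMon {a b : ℕ} (hb : 0 < b) (d : ℕ) :
    LinearIndependent K
      (fun t : stdExps a b d => Ideal.Quotient.mkₐ K (ciIdeal K a b) (xyzMon K t)) := by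
  rw [Fintype.linearIndependent_iff]
  rintro g hg ⟨⟨i, j, e⟩, ht⟩
  obtain ⟨hi, hj, he, -⟩ := mem_stdExps.mp ht
  have hmem : ∑ t, g t • xyzMon K t ∈ ciIdeal K a b := by
    rw [← Ideal.Quotient.eq_zero_iff_mem, ← Ideal.Quotient.mkₐ_eq_mk K, map_sum]
    simpa only [map_smul] using hg
  have hcoeff := coeff_laurentSubst_eq_zero_of_mem_ciIdeal hb hmem hi hj he
  simp only [map_sum, map_smul, laurentSubst_xyzMon, smul_single, smul_eq_mul, mul_one,
    AddMonoidAlgebra.coeff_sum, coeff_single, Finsupp.coe_finsetSum, Finset.sum_apply,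
    Finsupp.single_apply] at hcoeff
  rwa [Finset.sum_eq_single ⟨(i, j, e), ht⟩ (fun t _ hne => if_neg fun h => hne ?_) (by simp),
    if_pos rfl] at hcoeff
  obtain ⟨⟨i', j', e'⟩, ht'⟩ := t
  obtain ⟨-, hj', he', -⟩ := mem_stdExps.mp ht'
  exact Subtype.ext (substExp_injOn b ⟨hj', he'⟩ ⟨hj, he⟩ h)

end Independence

section Counting

def boxAntidiagonal (a b c : ℕ) : Finset (ℕ × ℕ) :=
  (antidiagonal c).filter fun p => p.1 < a ∧ p.2 < b

@[simp]
lemma mem_boxAntidiagonal {a b c i j : ℕ} :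
    (i, j) ∈ boxAntidiagonal a b c ↔ i + j = c ∧ i < a ∧ j < b := by
  simp [boxAntidiagonal]

lemma card_boxAntidiagonal {a b c n : ℕ} (hn : ∀ j, j ≤ c ∧ c - j < a ∧ j < b ↔ j < n) :
    #(boxAntidiagonal a b c) = n := by
  rw [← card_range n]
  refine card_nbij' Prod.snd (fun j => (c - j, j)) ?_ ?_ ?_ fun _ _ => rfl
  · rintro ⟨i, j⟩ h
    simpa using (hn j).mp (by simp at h; omega)
  · intro j hj
    have := (hn j).mpr (by simpa using hj)
    simp only [mem_coe, mem_boxAntidiagonal]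
    omega
  · rintro ⟨i, j⟩ h
    simp only [mem_coe, mem_boxAntidiagonal] at h
    rw [Prod.mk.injEq]
    omega

lemma card_boxAntidiagonal_of_le {a b c : ℕ} (hb : b ≤ c + 1) (ha : c < a) :
    #(boxAntidiagonal a b c) = b :=
  card_boxAntidiagonal fun _ => by omega

lemma card_boxAntidiagonal_of_lt {a b c : ℕ} (hb : c < b) (ha : c < a) :
    #(boxAntidiagonal a b c) = c + 1 :=
  card_boxAntidiagonal fun _ => by omega

lemma card_filter_stdExps {a b d e : ℕ} (he : e < 2) (hd : e ≤ d) :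
    #((stdExps a b d).filter fun t => t.2.2 = e) = #(boxAntidiagonal a b (d - e)) := by
  refine card_nbij' (fun t => (t.1, t.2.1)) (fun p => (p.1, p.2, e)) ?_ ?_ ?_ fun _ _ => rfl
  · rintro ⟨i, j, e'⟩ h
    simp only [coe_filter, mem_stdExps, Set.mem_ofPred_eq] at h
    simp only [mem_coe, mem_boxAntidiagonal]
    omega
  · rintro ⟨i, j⟩ h
    simp only [mem_coe, mem_boxAntidiagonal] at h
    simp only [coe_filter, mem_stdExps, Set.mem_ofPred_eq, and_true]
    omega
  · rintro ⟨i, j, e'⟩ h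
    simp only [coe_filter, mem_stdExps, Set.mem_ofPred_eq] at h
    simp only [h.2]

lemma card_stdExps {a b d : ℕ} (hd : 0 < d) :
    #(stdExps a b d) = #(boxAntidiagonal a b d) + #(boxAntidiagonal a b (d - 1)) := by
  rw [← card_filter_add_card_filter_not fun t : ℕ × ℕ × ℕ => t.2.2 = 0,
    card_filter_stdExps (by norm_num) (by omega), Nat.sub_zero,
    ← card_filter_stdExps (a := a) (b := b) (by norm_num) hd]
  congr 2
  refine filter_congr fun ⟨i, j, e⟩ h => ?_
  have := (mem_stdExps.mp h).2.2.1
  dsimp only at this ⊢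
  omega

end Counting

lemma hilb_ciIdeal {a b d : ℕ} (hb : 0 < b) (hd : 0 < d) :
    hilb K (ciIdeal K a b) d = #(boxAntidiagonal a b d) + #(boxAntidiagonal a b (d - 1)) := by
  rw [hilb, grComponent_ciIdeal_eq_span hb,
    finrank_span_eq_card (linearIndependent_mk_xyzMon hb d), Fintype.card_coe, card_stdExps hd]

end

theorem stmt_6_general (K : Type*) [Field K] (a b : ℕ)
    (hb : 2 ≤ b) :
    let I : Ideal (MvPolynomial (Fin 3) K) := Ideal.span
      {(X 0 : MvPolynomial (Fin 3) K) ^ a, X 1 ^ b - X 0 ^ (b - 1) * X 2, X 2 ^ 2}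
    let k : ℕ := (a + b - 1) / 2
    ((b + 1 ≤ a → hilb K I k = 2 * b) ∧
     (a = b → hilb K I k = 2 * b - 1) ∧
     (b + 3 ≤ a → hilb K I k = hilb K I (k - 1))) := by
  intro I k
  have hI : I = ciIdeal K a b := rfl
  have hk : k = (a + b - 1) / 2 := rfl
  rw [hI]
  refine ⟨fun ha => ?_, fun ha => ?_, fun ha => ?_⟩
  · rw [hilb_ciIdeal (by omega) (by omega), card_boxAntidiagonal_of_le (by omega) (by omega),
      card_boxAntidiagonal_of_le (by omega) (by omega)]
    omega
  · rw [hilb_ciIdeal (by omega) (by omega), card_boxAntidiagonal_of_le (by omega) (by omega),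
      card_boxAntidiagonal_of_lt (by omega) (by omega)]
    omega
  · rw [hilb_ciIdeal (by omega) (by omega), hilb_ciIdeal (by omega) (by omega),
      card_boxAntidiagonal_of_le (by omega) (by omega),
      card_boxAntidiagonal_of_le (by omega) (by omega),
      card_boxAntidiagonal_of_le (by omega) (by omega)]

theorem stmt_6 (K : Type*) [Field K] [CharZero K] (a b : ℕ)
    (hb : 2 ≤ b) (hab : b ≤ a) :
    let I : Ideal (MvPolynomial (Fin 3) K) := Ideal.span
      {(X 0 : MvPolynomial (Fin 3) K) ^ a, X 1 ^ b - X 0 ^ (b - 1) * X 2, X 2 ^ 2}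
    let k : ℕ := (a + b - 1) / 2
    ((b + 1 ≤ a → hilb K I k = 2 * b) ∧
     (a = b → hilb K I k = 2 * b - 1) ∧
     (b + 3 ≤ a → hilb K I k = hilb K I (k - 1))) :=
  stmt_6_general K a b hb
end

section
/- Let K be a field of characteristic zero, R = K[x,y,z], and let a ≥ b ≥ 2 and β be integers with 1 ≤ β ≤ min{a−b+1, b−1}. Then the quotient of R by the ideal I_β = (x^a, y^b − x^{b−1} z, z^2, x^{a−b+1} y^{b−β}, y^{b−β} z) has the weak Lefschetz property. -/
open MvPolynomial

/-! Take `L = x`. The generators of `I_β` other than `z²` and `y^(b-β) z` have degree at least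
`b` (here `b ≤ a` and `β ≤ a - b + 1` enter), so in degrees below `b` the ideal agrees with the
monomial ideal `(z², y^(b-β) z)`, on which `x` is a nonzerodivisor: multiplication by `x` is
injective into degrees `< b`. From degree `b` on, a monomial is divisible by `x`, or lies in
`I_β` (`z²` or `y^(b-β) z` divides it), or is `y^q` with `q ≥ b`, and `y^b ≡ x^(b-1) z` makes
it divisible by `x` modulo `I_β`: multiplication by `x` is surjective there. -/

namespace MvPolynomial

variable {σ R : Type*} [CommSemiring R]

theorem homogeneousComponent_mul_of_lt {g : MvPolynomial σ R} {e d : ℕ}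
    (hg : g.IsHomogeneous e) (r : MvPolynomial σ R) (hd : d < e) :
    homogeneousComponent d (r * g) = 0 := by
  classical
  ext μ
  rw [coeff_homogeneousComponent, coeff_zero]
  split_ifs with hμ
  · rw [coeff_mul]
    refine Finset.sum_eq_zero fun x hx => ?_
    rw [Finset.HasAntidiagonal.mem_antidiagonal] at hx
    have hsum : x.1.degree + x.2.degree = d := by rw [← map_add, hx, hμ]
    rw [hg.coeff_eq_zero (by omega), mul_zero]
  · rfl

theorem homogeneousComponent_mul_of_le {g : MvPolynomial σ R} {e d : ℕ}
    (hg : g.IsHomogeneous e) (r : MvPolynomial σ R) (hd : e ≤ d) :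
    homogeneousComponent d (r * g) = homogeneousComponent (d - e) r * g := by
  classical
  ext μ
  simp only [coeff_homogeneousComponent, coeff_mul]
  split_ifs with hμ
  · refine Finset.sum_congr rfl fun x hx => ?_
    rw [Finset.HasAntidiagonal.mem_antidiagonal] at hx
    by_cases hx2 : x.2.degree = e
    · have hsum : x.1.degree + x.2.degree = d := by rw [← map_add, hx, hμ]
      rw [if_pos (by omega)]
    · rw [hg.coeff_eq_zero hx2, mul_zero, mul_zero]
  · refine (Finset.sum_eq_zero fun x hx => ?_).symm
    rw [Finset.HasAntidiagonal.mem_antidiagonal] at hx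
    by_cases hx2 : x.2.degree = e
    · have hsum : x.1.degree + x.2.degree = μ.degree := by rw [← map_add, hx]
      rw [if_neg (by omega), zero_mul]
    · rw [hg.coeff_eq_zero hx2, mul_zero]

theorem IsHomogeneous.mem_span_of_mem_span_union {s t : Set (MvPolynomial σ R)}
    {p : MvPolynomial σ R} {d : ℕ} (hp : p.IsHomogeneous d)
    (hs : ∀ g ∈ s, ∃ e, g.IsHomogeneous e) (ht : ∀ g ∈ t, ∃ e, d < e ∧ g.IsHomogeneous e)
    (hmem : p ∈ Ideal.span (s ∪ t)) : p ∈ Ideal.span s := by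
  obtain ⟨c, T, hT, -, rfl⟩ := Submodule.mem_span_iff_exists_finset_subset.mp hmem
  rw [← homogeneousComponent_eq_self hp, map_sum]
  refine Ideal.sum_mem _ fun g hg => ?_
  rw [smul_eq_mul]
  rcases hT hg with hgs | hgt
  · obtain ⟨e, he⟩ := hs g hgs
    rcases le_or_gt e d with hed | hde
    · rw [homogeneousComponent_mul_of_le he _ hed]
      exact Ideal.mul_mem_left _ _ (Ideal.subset_span hgs)
    · rw [homogeneousComponent_mul_of_lt he _ hde]
      exact zero_mem _
  · obtain ⟨e, hde, he⟩ := ht g hgt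
    rw [homogeneousComponent_mul_of_lt he _ hde]
    exact zero_mem _

theorem mem_span_monomial_of_X_mul_mem {s : Set (σ →₀ ℕ)} {i : σ} (hs : ∀ m ∈ s, m i = 0)
    {p : MvPolynomial σ R} (hp : X i * p ∈ Ideal.span ((fun m => monomial m (1 : R)) '' s)) :
    p ∈ Ideal.span ((fun m => monomial m (1 : R)) '' s) := by
  classical
  rw [mem_ideal_span_monomial_image] at hp ⊢
  intro v hv
  obtain ⟨m, hm, hle⟩ := hp (Finsupp.single i 1 + v)
    (by rwa [mem_support_iff, coeff_X_mul, ← mem_support_iff])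
  refine ⟨m, hm, fun j => ?_⟩
  by_cases hj : j = i
  · simp [hj, hs m hm]
  · simpa [Finsupp.single_apply, Ne.symm hj] using hle j

theorem IsHomogeneous.mem_of_monomial_mem {M : Submodule R (MvPolynomial σ R)}
    {p : MvPolynomial σ R} {n : ℕ} (hp : p.IsHomogeneous n)
    (hM : ∀ v : σ →₀ ℕ, v.degree = n → monomial v 1 ∈ M) : p ∈ M := by
  rw [p.as_sum]
  refine Submodule.sum_mem _ fun v hv => ?_
  rw [← mul_one (coeff v p), ← smul_eq_mul, ← smul_monomial]
  refine M.smul_mem _ (hM v ?_)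
  rw [Finsupp.degree_eq_weight_one]
  exact hp (mem_support_iff.mp hv)

end MvPolynomial

theorem Finsupp.degree_fin_three (v : Fin 3 →₀ ℕ) : v.degree = v 0 + v 1 + v 2 := by
  rw [Finsupp.degree_eq_sum, Fin.sum_univ_three]

theorem MvPolynomial.monomial_fin_three_one {K : Type*} [CommSemiring K] (v : Fin 3 →₀ ℕ) :
    (monomial v 1 : MvPolynomial (Fin 3) K) = X 0 ^ v 0 * X 1 ^ v 1 * X 2 ^ v 2 := by
  rw [monomial_eq, C_1, one_mul, Finsupp.prod_pow, Fin.prod_univ_three]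

section

variable {K : Type*} [Field K]

theorem mul_left_injOn_grComponent {I : Ideal (MvPolynomial (Fin 3) K)}
    {L : MvPolynomial (Fin 3) K} {i : ℕ}
    (hI : ∀ p : MvPolynomial (Fin 3) K, p.IsHomogeneous i → L * p ∈ I → p ∈ I) :
    ∀ u ∈ grComponent K I i, ∀ v ∈ grComponent K I i,
      Ideal.Quotient.mk I L * u = Ideal.Quotient.mk I L * v → u = v := by
  rintro _ ⟨f, hf, rfl⟩ _ ⟨f', hf', rfl⟩ hff'
  simp only [AlgHom.toLinearMap_apply, Ideal.Quotient.mkₐ_eq_mk, ← map_mul,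
    Ideal.Quotient.eq, ← mul_sub] at hff' ⊢
  exact hI _ (hf.sub hf') hff'

theorem mul_left_surjOn_grComponent {I : Ideal (MvPolynomial (Fin 3) K)}
    {L : MvPolynomial (Fin 3) K} {i : ℕ}
    (hI : ∀ v : Fin 3 →₀ ℕ, v.degree = i + 1 →
      ∃ g : MvPolynomial (Fin 3) K, g.IsHomogeneous i ∧ monomial v 1 - L * g ∈ I) :
    ∀ w ∈ grComponent K I (i + 1), ∃ u ∈ grComponent K I i,
      Ideal.Quotient.mk I L * u = w := by
  rintro _ ⟨f, hf, rfl⟩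
  suffices f ∈ ((grComponent K I i).map
      (LinearMap.mulLeft K (Ideal.Quotient.mk I L))).comap (Ideal.Quotient.mkₐ K I).toLinearMap by
    simpa using this
  refine IsHomogeneous.mem_of_monomial_mem hf fun v hv => ?_
  obtain ⟨g, hg, hmem⟩ := hI v hv
  exact ⟨Ideal.Quotient.mk I g, ⟨g, hg, rfl⟩, by simpa using (Ideal.Quotient.eq.mpr hmem).symm⟩

end

section IdealBeta

variable {K : Type*} [Field K]

variable (K) in
/-- The ideal `I_β` of the paper, with `x, y, z = X 0, X 1, X 2`. -/
noncomputable def idealBeta (a b β : ℕ) : Ideal (MvPolynomial (Fin 3) K) :=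
  Ideal.span {X 0 ^ a, X 1 ^ b - X 0 ^ (b - 1) * X 2, X 2 ^ 2,
    X 0 ^ (a - b + 1) * X 1 ^ (b - β), X 1 ^ (b - β) * X 2}

theorem span_X_two_sq_eq_span_monomial (m : ℕ) :
    Ideal.span {(X 2 : MvPolynomial (Fin 3) K) ^ 2, X 1 ^ m * X 2} =
      Ideal.span ((fun v => monomial v (1 : K)) ''
        {Finsupp.single 2 2, Finsupp.single 1 m + Finsupp.single 2 1}) := by
  rw [Set.image_pair, monomial_add_single, ← X_pow_eq_monomial, ← X_pow_eq_monomial, pow_one]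

theorem mem_span_X_two_sq_of_X_zero_mul_mem {m : ℕ} {p : MvPolynomial (Fin 3) K}
    (hp : X 0 * p ∈ Ideal.span {(X 2 : MvPolynomial (Fin 3) K) ^ 2, X 1 ^ m * X 2}) :
    p ∈ Ideal.span {(X 2 : MvPolynomial (Fin 3) K) ^ 2, X 1 ^ m * X 2} := by
  rw [span_X_two_sq_eq_span_monomial] at hp ⊢
  refine mem_span_monomial_of_X_mul_mem ?_ hp
  simp

theorem span_X_two_sq_le_idealBeta (a b β : ℕ) :
    Ideal.span {(X 2 : MvPolynomial (Fin 3) K) ^ 2, X 1 ^ (b - β) * X 2} ≤ idealBeta K a b β :=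
  Ideal.span_mono (by intro g; simp only [Set.mem_insert_iff, Set.mem_singleton_iff]; tauto)

theorem mem_span_X_two_sq_of_mem_idealBeta {a b β d : ℕ} (hab : b ≤ a) (hβa : β ≤ a - b + 1)
    (hd : d < b) {p : MvPolynomial (Fin 3) K} (hp : p.IsHomogeneous d)
    (hmem : p ∈ idealBeta K a b β) :
    p ∈ Ideal.span {(X 2 : MvPolynomial (Fin 3) K) ^ 2, X 1 ^ (b - β) * X 2} := by
  refine hp.mem_span_of_mem_span_union (t := {X 0 ^ a, X 1 ^ b - X 0 ^ (b - 1) * X 2,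
    X 0 ^ (a - b + 1) * X 1 ^ (b - β)}) ?_ ?_ ?_
  · rintro g (rfl | rfl)
    exacts [⟨_, isHomogeneous_X_pow _ _⟩, ⟨_, (isHomogeneous_X_pow _ _).mul (isHomogeneous_X _ _)⟩]
  · rintro g (rfl | rfl | rfl)
    · exact ⟨a, by omega, isHomogeneous_X_pow _ _⟩
    · refine ⟨b, hd, (isHomogeneous_X_pow _ _).sub ?_⟩
      have := (isHomogeneous_X_pow (R := K) (0 : Fin 3) (b - 1)).mul (isHomogeneous_X K 2)
      rwa [Nat.sub_add_cancel (by omega)] at this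
    · exact ⟨_, by omega, (isHomogeneous_X_pow _ _).mul (isHomogeneous_X_pow _ _)⟩
  · refine Ideal.span_mono (fun g hg => ?_) hmem
    simp only [Set.mem_insert_iff, Set.mem_singleton_iff, Set.mem_union] at hg ⊢
    tauto

theorem mem_idealBeta_of_X_zero_mul_mem {a b β i : ℕ} (hab : b ≤ a) (hβa : β ≤ a - b + 1)
    (hi : i + 1 < b) {p : MvPolynomial (Fin 3) K} (hp : p.IsHomogeneous i)
    (hXp : X 0 * p ∈ idealBeta K a b β) : p ∈ idealBeta K a b β := by
  have hXp_hom : (X 0 * p).IsHomogeneous (i + 1) := by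
    simpa [add_comm] using (isHomogeneous_X K 0).mul hp
  exact span_X_two_sq_le_idealBeta a b β <| mem_span_X_two_sq_of_X_zero_mul_mem <|
    mem_span_X_two_sq_of_mem_idealBeta hab hβa hi hXp_hom hXp

theorem exists_X_zero_mul_sub_mem_idealBeta {a b β : ℕ} (hβ1 : 1 ≤ β) (hβb : β ≤ b - 1)
    {p q r i : ℕ} (hi : b ≤ i + 1) (hpqr : p + q + r = i + 1) :
    ∃ g : MvPolynomial (Fin 3) K, g.IsHomogeneous i ∧
      X 0 ^ p * X 1 ^ q * X 2 ^ r - X 0 * g ∈ idealBeta K a b β := by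
  have mem : ∀ f g : MvPolynomial (Fin 3) K, g ∈ ({X 0 ^ a, X 1 ^ b - X 0 ^ (b - 1) * X 2,
      X 2 ^ 2, X 0 ^ (a - b + 1) * X 1 ^ (b - β), X 1 ^ (b - β) * X 2} : Set _) →
      f * g ∈ idealBeta K a b β :=
    fun f g hg => Ideal.mul_mem_left _ f (Ideal.subset_span hg)
  rcases p with _ | p
  · rcases r with _ | _ | r
    · obtain ⟨c, rfl⟩ : ∃ c, b = c + 2 := ⟨b - 2, by omega⟩
      obtain ⟨s, rfl⟩ : ∃ s, q = s + (c + 2) := ⟨q - (c + 2), by omega⟩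
      refine ⟨X 0 ^ c * X 1 ^ s * X 2, ?_, ?_⟩
      · have := ((isHomogeneous_X_pow (R := K) (0 : Fin 3) c).mul
          (isHomogeneous_X_pow 1 s)).mul (isHomogeneous_X K 2)
        rwa [show c + s + 1 = i by omega] at this
      · have h : X 0 ^ 0 * X 1 ^ (s + (c + 2)) * X 2 ^ 0 - X 0 * (X 0 ^ c * X 1 ^ s * X 2) =
            X 1 ^ s * (X 1 ^ (c + 2) - X 0 ^ (c + 2 - 1) * X 2 : MvPolynomial (Fin 3) K) := by
          rw [show c + 2 - 1 = c + 1 by omega]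
          ring
        exact h ▸ mem _ _ (by simp)
    · obtain ⟨s, rfl⟩ : ∃ s, q = s + (b - β) := ⟨q - (b - β), by omega⟩
      have h : X 0 ^ 0 * X 1 ^ (s + (b - β)) * X 2 ^ (0 + 1) - X 0 * 0 =
          X 1 ^ s * (X 1 ^ (b - β) * X 2 : MvPolynomial (Fin 3) K) := by ring
      exact ⟨0, isHomogeneous_zero _ _ _, h ▸ mem _ _ (by simp)⟩
    · have h : X 0 ^ 0 * X 1 ^ q * X 2 ^ (r + 1 + 1) - X 0 * 0 =
          X 1 ^ q * X 2 ^ r * (X 2 ^ 2 : MvPolynomial (Fin 3) K) := by ring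
      exact ⟨0, isHomogeneous_zero _ _ _, h ▸ mem _ _ (by simp)⟩
  · refine ⟨X 0 ^ p * X 1 ^ q * X 2 ^ r, ?_, by ring_nf; exact zero_mem _⟩
    have := ((isHomogeneous_X_pow (R := K) (0 : Fin 3) p).mul
      (isHomogeneous_X_pow 1 q)).mul (isHomogeneous_X_pow 2 r)
    rwa [show p + q + r = i by omega] at this

end IdealBeta

theorem stmt_8_general (K : Type*) [Field K] (a b β : ℕ)
    (hab : b ≤ a) (hβ1 : 1 ≤ β)
    (hβ2 : β ≤ min (a - b + 1) (b - 1)) :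
    hasWLP K (Ideal.span {(X 0 : MvPolynomial (Fin 3) K) ^ a,
      X 1 ^ b - X 0 ^ (b - 1) * X 2, X 2 ^ 2,
      X 0 ^ (a - b + 1) * X 1 ^ (b - β), X 1 ^ (b - β) * X 2}) := by
  obtain ⟨hβa, hβb⟩ := le_min_iff.mp hβ2
  refine ⟨X 0, isHomogeneous_X K 0, fun i => ?_⟩
  rcases lt_or_ge (i + 1) b with hi | hi
  · exact Or.inl <| mul_left_injOn_grComponent fun p hp hXp =>
      mem_idealBeta_of_X_zero_mul_mem hab hβa hi hp hXp
  · refine Or.inr <| mul_left_surjOn_grComponent fun v hv => ?_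
    rw [monomial_fin_three_one]
    exact exists_X_zero_mul_sub_mem_idealBeta hβ1 hβb hi (by rwa [← Finsupp.degree_fin_three])

theorem stmt_8 (K : Type*) [Field K] [CharZero K] (a b β : ℕ)
    (hb : 2 ≤ b) (hab : b ≤ a) (hβ1 : 1 ≤ β)
    (hβ2 : β ≤ min (a - b + 1) (b - 1)) :
    hasWLP K (Ideal.span {(X 0 : MvPolynomial (Fin 3) K) ^ a,
      X 1 ^ b - X 0 ^ (b - 1) * X 2, X 2 ^ 2,
      X 0 ^ (a - b + 1) * X 1 ^ (b - β), X 1 ^ (b - β) * X 2}) :=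
  stmt_8_general K a b β hab hβ1 hβ2
end

section
/- Let K be a field of characteristic zero, R = K[x,y,z], and let a ≥ c ≥ 2 and α ∈ {1,2} be integers with c + α ≥ 4. Let I_1 = (x^a, y^3 − x^α z^{3−α}, z^c, x^{a−α} y^2, y^2 z^{c+α−3}) and set k = ⌊(a+c−1)/2⌋. Then h_{R/I_1}(k) = 3c−3 if a = c, and h_{R/I_1}(k) = 3c−3+α if a ≥ c+1. Moreover, if a ≥ c+3, then h_{R/I_1}(k) = h_{R/I_1}(k−1). -/
open MvPolynomial

/-!
Modulo the binomial `y³ - x^α z^(3-α)` every monomial is congruent to one of the form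
`x^p y^r z^q` with `r < 3`, and such a monomial lies in `I₁` exactly when `p` or `q` reaches
the bound imposed by the monomial generators for that `r`. Reducing each monomial in this way
and discarding the ones in `I₁` is a `K`-linear map on `R` whose kernel is exactly `I₁`: the
binomial is killed because both of its terms reduce to the same monomial. Hence `h_{R/I₁}(m)`
is the number of surviving monomials of degree `m`, which for each `r < 3` is the length of an
interval of possible `p`; the three claims follow from this count by arithmetic.
-/

open Finsupp

section FinrankMap

variable {R M N₁ N₂ : Type*} [Ring R] [AddCommGroup M] [Module R M]
  [AddCommGroup N₁] [Module R N₁] [AddCommGroup N₂] [Module R N₂]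

theorem Submodule.finrank_map_eq_of_ker_eq {f : M →ₗ[R] N₁} {g : M →ₗ[R] N₂}
    (h : LinearMap.ker f = LinearMap.ker g) (P : Submodule R M) :
    Module.finrank R (P.map f) = Module.finrank R (P.map g) := by
  have range_f : LinearMap.range (f ∘ₗ P.subtype) = P.map f := by
    rw [LinearMap.range_comp, Submodule.range_subtype]
  have range_g : LinearMap.range (g ∘ₗ P.subtype) = P.map g := by
    rw [LinearMap.range_comp, Submodule.range_subtype]
  exact LinearEquiv.finrank_eq <|
    (LinearEquiv.ofEq _ _ range_f).symm ≪≫ₗ (f ∘ₗ P.subtype).quotKerEquivRange.symm ≪≫ₗ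
      Submodule.quotEquivOfEq _ _ (by rw [LinearMap.ker_comp, LinearMap.ker_comp, h]) ≪≫ₗ
      (g ∘ₗ P.subtype).quotKerEquivRange ≪≫ₗ LinearEquiv.ofEq _ _ range_g

end FinrankMap

theorem Finsupp.finrank_span_image_single_one {K ι : Type*} [Field K] (s : Finset ι) :
    Module.finrank K (Submodule.span K ((fun i => single i (1 : K)) '' (s : Set ι))) =
      s.card := by
  rw [Set.image_eq_range]
  exact (finrank_span_eq_card ((linearIndependent_single_one K ι).comp _
    Subtype.val_injective)).trans (Fintype.card_coe s)

namespace MvPolynomial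

variable {σ K V : Type*} [Field K] [AddCommGroup V] [Module K V]

theorem monomial_eq_smul_monomial_one (d : σ →₀ ℕ) (a : K) :
    monomial d a = a • monomial d 1 := by
  rw [smul_monomial, smul_eq_mul, mul_one]

theorem map_mul_eq_zero_of_forall_monomial_mul (Φ : MvPolynomial σ K →ₗ[K] V)
    {G : MvPolynomial σ K} (hG : ∀ d, Φ (monomial d 1 * G) = 0) (p : MvPolynomial σ K) :
    Φ (p * G) = 0 := by
  induction p using MvPolynomial.induction_on' with
  | monomial d a =>
    rw [monomial_eq_smul_monomial_one, smul_mul_assoc, map_smul, hG, smul_zero]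
  | add p q hp hq => rw [add_mul, map_add, hp, hq, add_zero]

theorem span_le_ker_of_forall_monomial_mul (Φ : MvPolynomial σ K →ₗ[K] V)
    {S : Set (MvPolynomial σ K)} (hS : ∀ G ∈ S, ∀ d, Φ (monomial d 1 * G) = 0) :
    (Ideal.span S).restrictScalars K ≤ LinearMap.ker Φ := by
  intro f hf
  have h : ∀ p, Φ (p * f) = 0 := by
    induction hf using Submodule.span_induction with
    | mem G hG => exact map_mul_eq_zero_of_forall_monomial_mul Φ (hS G hG)
    | zero => simp
    | add f g _ _ hf hg => intro p; rw [mul_add, map_add, hf, hg, add_zero]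
    | smul r f _ hf => intro p; rw [smul_eq_mul, ← mul_assoc]; exact hf _
  simpa using h 1

theorem ker_le_of_forall_monomial_sub_mem (Φ : MvPolynomial σ K →ₗ[K] V)
    (s : V →ₗ[K] MvPolynomial σ K) {I : Ideal (MvPolynomial σ K)}
    (h : ∀ d, monomial d 1 - s (Φ (monomial d 1)) ∈ I) :
    LinearMap.ker Φ ≤ I.restrictScalars K := by
  have sub_mem : ∀ f, f - s (Φ f) ∈ I := by
    intro f
    induction f using MvPolynomial.induction_on' with
    | monomial d a =>
      rw [monomial_eq_smul_monomial_one, map_smul, map_smul, ← smul_sub, smul_eq_C_mul]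
      exact I.mul_mem_left _ (h d)
    | add p q hp hq =>
      convert I.add_mem hp hq using 1
      rw [map_add, map_add]
      abel
  intro f hf
  simpa [LinearMap.mem_ker.mp hf] using sub_mem f

end MvPolynomial

theorem hilb_eq_finrank_map_of_ker_eq {K V : Type*} [Field K] [AddCommGroup V] [Module K V]
    {I : Ideal (MvPolynomial (Fin 3) K)} {Φ : MvPolynomial (Fin 3) K →ₗ[K] V}
    (hΦ : LinearMap.ker Φ = I.restrictScalars K) (m : ℕ) :
    hilb K I m = Module.finrank K ((homogeneousSubmodule (Fin 3) K m).map Φ) :=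
  Submodule.finrank_map_eq_of_ker_eq (by ext f; simp [Ideal.Quotient.eq_zero_iff_mem, hΦ]) _

namespace I1

variable (K : Type*) [Field K] (a c α : ℕ)

def gens : Set (MvPolynomial (Fin 3) K) :=
  {X 0 ^ a, X 1 ^ 3 - X 0 ^ α * X 2 ^ (3 - α), X 2 ^ c, X 0 ^ (a - α) * X 1 ^ 2,
    X 1 ^ 2 * X 2 ^ (c + α - 3)}

def xBound (r : ℕ) : ℕ := if r = 2 then a - α else a

def zBound (r : ℕ) : ℕ := if r = 2 then c + α - 3 else c

/-- A triple `(p, r, q)` stands for the monomial `x^p y^r z^q`. -/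
def IsStandard (t : ℕ × ℕ × ℕ) : Prop :=
  t.1 < xBound a α t.2.1 ∧ t.2.2 < zBound c α t.2.1

instance : DecidablePred (IsStandard a c α) := fun _ => instDecidableAnd

/-- The exponents of the monomial `x^(d 0) y^(d 1) z^(d 2)` after each `y^3` has been replaced
by `x^α z^(3-α)`. -/
def reduce (d : Fin 3 →₀ ℕ) : ℕ × ℕ × ℕ :=
  (d 0 + α * (d 1 / 3), d 1 % 3, d 2 + (3 - α) * (d 1 / 3))

noncomputable def standardPart (t : ℕ × ℕ × ℕ) : (ℕ × ℕ × ℕ) →₀ K :=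
  if IsStandard a c α t then single t 1 else 0

noncomputable def normalForm : MvPolynomial (Fin 3) K →ₗ[K] (ℕ × ℕ × ℕ) →₀ K :=
  (basisMonomials (Fin 3) K).constr K fun d => standardPart K a c α (reduce α d)

noncomputable def toMonomial (t : ℕ × ℕ × ℕ) : MvPolynomial (Fin 3) K :=
  X 0 ^ t.1 * X 1 ^ t.2.1 * X 2 ^ t.2.2

theorem normalForm_monomial (d : Fin 3 →₀ ℕ) :
    normalForm K a c α (monomial d 1) = standardPart K a c α (reduce α d) := by
  rw [show monomial d (1 : K) = basisMonomials (Fin 3) K d by rw [coe_basisMonomials],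
    normalForm, Module.Basis.constr_basis]

theorem normalForm_monomial_mul_monomial_eq_zero {e : Fin 3 →₀ ℕ}
    (he : ∀ d, ¬IsStandard a c α (reduce α (d + e))) (d : Fin 3 →₀ ℕ) :
    normalForm K a c α (monomial d 1 * monomial e 1) = 0 := by
  rw [monomial_mul, one_mul, normalForm_monomial, standardPart, if_neg (he d)]

theorem reduce_add_single_one_three (d : Fin 3 →₀ ℕ) :
    reduce α (d + single 1 3) = reduce α (d + (single 0 α + single 2 (3 - α))) := by
  simp only [reduce, Finsupp.add_apply, single_apply, Fin.reduceEq, if_true, if_false, add_zero,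
    zero_add, Nat.add_div_right _ three_pos, Nat.add_mod_right, Prod.mk.injEq]
  exact ⟨by ring, trivial, by ring⟩

theorem not_isStandard_reduce_add_single_zero (d : Fin 3 →₀ ℕ) :
    ¬IsStandard a c α (reduce α (d + single 0 a)) := by
  simp only [IsStandard, reduce, xBound, Finsupp.add_apply, single_apply, Fin.reduceEq, if_true,
    if_false, add_zero]
  split_ifs <;> omega

theorem not_isStandard_reduce_add_single_two (hα : α ≤ 3) (d : Fin 3 →₀ ℕ) :
    ¬IsStandard a c α (reduce α (d + single 2 c)) := by
  simp only [IsStandard, reduce, zBound, Finsupp.add_apply, single_apply, Fin.reduceEq, if_true,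
    if_false, add_zero]
  split_ifs <;> omega

/- If the remainder of `d 1 + 2` mod 3 is not 2, at least one `y^3` has been traded for
`x^α z^(3-α)`, which makes up for the missing factors of the generator. -/
theorem not_isStandard_reduce_add_single_zero_add_single_one (d : Fin 3 →₀ ℕ) :
    ¬IsStandard a c α (reduce α (d + (single 0 (a - α) + single 1 2))) := by
  simp only [IsStandard, reduce, xBound, Finsupp.add_apply, single_apply, Fin.reduceEq, if_true,
    if_false, add_zero, zero_add]
  split_ifs with h
  · omega
  · have : α ≤ α * ((d 1 + 2) / 3) := Nat.le_mul_of_pos_right _ (by omega)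
    omega

theorem not_isStandard_reduce_add_single_one_add_single_two (d : Fin 3 →₀ ℕ) :
    ¬IsStandard a c α (reduce α (d + (single 1 2 + single 2 (c + α - 3)))) := by
  simp only [IsStandard, reduce, zBound, Finsupp.add_apply, single_apply, Fin.reduceEq, if_true,
    if_false, add_zero, zero_add]
  split_ifs with h
  · omega
  · have : 3 - α ≤ (3 - α) * ((d 1 + 2) / 3) := Nat.le_mul_of_pos_right _ (by omega)
    omega

theorem normalForm_monomial_mul_gens (hα : α ≤ 3) :
    ∀ G ∈ gens K a c α, ∀ d, normalForm K a c α (monomial d 1 * G) = 0 := by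
  have X_pow_mul_X_pow (i j : Fin 3) (m n : ℕ) :
      (X i ^ m * X j ^ n : MvPolynomial (Fin 3) K) = monomial (single i m + single j n) 1 := by
    rw [X_pow_eq_monomial, X_pow_eq_monomial, monomial_mul, one_mul]
  simp only [gens, Set.mem_insert_iff, Set.mem_singleton_iff]
  rintro G (rfl | rfl | rfl | rfl | rfl)
  · rw [X_pow_eq_monomial]
    exact normalForm_monomial_mul_monomial_eq_zero K a c α
      (not_isStandard_reduce_add_single_zero a c α)
  · intro d
    rw [mul_sub, map_sub, sub_eq_zero, X_pow_mul_X_pow, X_pow_eq_monomial, monomial_mul,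
      monomial_mul, mul_one, normalForm_monomial, normalForm_monomial, reduce_add_single_one_three]
  · rw [X_pow_eq_monomial]
    exact normalForm_monomial_mul_monomial_eq_zero K a c α
      (not_isStandard_reduce_add_single_two a c α hα)
  · rw [X_pow_mul_X_pow]
    exact normalForm_monomial_mul_monomial_eq_zero K a c α
      (not_isStandard_reduce_add_single_zero_add_single_one a c α)
  · rw [X_pow_mul_X_pow]
    exact normalForm_monomial_mul_monomial_eq_zero K a c α
      (not_isStandard_reduce_add_single_one_add_single_two a c α)

theorem monomial_eq_toMonomial (d : Fin 3 →₀ ℕ) :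
    monomial d (1 : K) = toMonomial K (d 0, d 1, d 2) := by
  rw [monomial_eq, C_1, one_mul, Finsupp.prod_fintype _ _ fun _ => pow_zero _,
    Fin.prod_univ_three]
  rfl

theorem monomial_sub_toMonomial_reduce_mem (d : Fin 3 →₀ ℕ) :
    monomial d 1 - toMonomial K (reduce α d) ∈ Ideal.span (gens K a c α) := by
  have factor : monomial d 1 - toMonomial K (reduce α d) =
      X 0 ^ d 0 * X 1 ^ (d 1 % 3) * X 2 ^ d 2 *
        ((X 1 ^ 3) ^ (d 1 / 3) - (X 0 ^ α * X 2 ^ (3 - α)) ^ (d 1 / 3)) := by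
    have split_y :
        (X 1 : MvPolynomial (Fin 3) K) ^ d 1 = X 1 ^ (d 1 % 3) * (X 1 ^ 3) ^ (d 1 / 3) := by
      rw [← pow_mul, ← pow_add, Nat.mod_add_div]
    rw [monomial_eq_toMonomial, toMonomial, toMonomial, reduce, split_y]
    ring
  rw [factor]
  exact Ideal.mem_of_dvd _ ((sub_dvd_pow_sub_pow _ _ _).mul_left _)
    (Ideal.subset_span (by simp [gens]))

theorem toMonomial_mem_of_not_isStandard {t : ℕ × ℕ × ℕ} (ht : ¬IsStandard a c α t) :
    toMonomial K t ∈ Ideal.span (gens K a c α) := by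
  obtain ⟨p, r, q⟩ := t
  have mem_of_dvd (G : MvPolynomial (Fin 3) K) (hG : G ∈ gens K a c α)
      (h : G ∣ X 0 ^ p * X 1 ^ r * X 2 ^ q) :
      toMonomial K (p, r, q) ∈ Ideal.span (gens K a c α) :=
    Ideal.mem_of_dvd _ h (Ideal.subset_span hG)
  simp only [IsStandard, xBound, zBound, not_and_or, not_lt] at ht
  rcases ht with hp | hq
  · split_ifs at hp with hr
    · subst hr
      exact mem_of_dvd (X 0 ^ (a - α) * X 1 ^ 2) (by simp [gens])
        ((mul_dvd_mul (pow_dvd_pow _ hp) dvd_rfl).mul_right _)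
    · exact mem_of_dvd (X 0 ^ a) (by simp [gens]) (((pow_dvd_pow _ hp).mul_right _).mul_right _)
  · split_ifs at hq with hr
    · subst hr
      refine mem_of_dvd (X 1 ^ 2 * X 2 ^ (c + α - 3)) (by simp [gens]) ?_
      rw [mul_assoc]
      exact (mul_dvd_mul dvd_rfl (pow_dvd_pow _ hq)).mul_left _
    · exact mem_of_dvd (X 2 ^ c) (by simp [gens]) ((pow_dvd_pow _ hq).mul_left _)

theorem monomial_sub_normalForm_mem (d : Fin 3 →₀ ℕ) :
    monomial d 1 - linearCombination K (toMonomial K) (normalForm K a c α (monomial d 1)) ∈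
      Ideal.span (gens K a c α) := by
  rw [normalForm_monomial, standardPart]
  split_ifs with h
  · rw [linearCombination_single, one_smul]
    exact monomial_sub_toMonomial_reduce_mem K a c α d
  · rw [map_zero, sub_zero]
    simpa using add_mem (monomial_sub_toMonomial_reduce_mem K a c α d)
      (toMonomial_mem_of_not_isStandard K a c α h)

theorem ker_normalForm (hα : α ≤ 3) :
    LinearMap.ker (normalForm K a c α) = (Ideal.span (gens K a c α)).restrictScalars K :=
  le_antisymm (ker_le_of_forall_monomial_sub_mem _ _ (monomial_sub_normalForm_mem K a c α))
    (span_le_ker_of_forall_monomial_mul _ (normalForm_monomial_mul_gens K a c α hα))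

open Finset

def standardOfDegree (m : ℕ) : Finset (ℕ × ℕ × ℕ) :=
  (range (m + 1) ×ˢ range 3 ×ˢ range (m + 1)).filter
    fun t => IsStandard a c α t ∧ t.1 + t.2.1 + t.2.2 = m

theorem reduce_degree (hα : α ≤ 3) (d : Fin 3 →₀ ℕ) :
    (reduce α d).1 + (reduce α d).2.1 + (reduce α d).2.2 = d.degree := by
  have : α * (d 1 / 3) + (3 - α) * (d 1 / 3) = 3 * (d 1 / 3) := by
    rw [← add_mul, Nat.add_sub_cancel' hα]
  simp only [degree_eq_sum, Fin.sum_univ_three, reduce]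
  omega

theorem reduce_of_lt_three (t : ℕ × ℕ × ℕ) (ht : t.2.1 < 3) :
    reduce α (equivFunOnFinite.symm ![t.1, t.2.1, t.2.2]) = t := by
  simp [reduce, Nat.mod_eq_of_lt ht, Nat.div_eq_of_lt ht]

theorem map_homogeneousSubmodule_normalForm (hα : α ≤ 3) (m : ℕ) :
    (homogeneousSubmodule (Fin 3) K m).map (normalForm K a c α) =
      Submodule.span K ((fun t => single t 1) '' (standardOfDegree a c α m : Set _)) := by
  rw [homogeneousSubmodule_eq_finsupp_supported, AddMonoidAlgebra.supported_eq_span_single,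
    Submodule.map_span, Set.image_image]
  apply le_antisymm <;> rw [Submodule.span_le]
  · rintro _ ⟨d, hd, rfl⟩
    show normalForm K a c α (monomial d 1) ∈ _
    rw [normalForm_monomial, standardPart]
    split_ifs with h
    · refine Submodule.subset_span ⟨reduce α d, ?_, rfl⟩
      have := reduce_degree α hα d
      simp only [standardOfDegree, coe_filter, mem_product, mem_range, Set.mem_ofPred] at hd ⊢
      refine ⟨⟨?_, ?_, ?_⟩, h, by omega⟩ <;> simp only [reduce] at this ⊢ <;> omega
    · exact zero_mem _
  · rintro _ ⟨t, ht, rfl⟩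
    simp only [standardOfDegree, coe_filter, mem_product, mem_range, Set.mem_ofPred] at ht
    obtain ⟨⟨-, hr, -⟩, h, hdeg⟩ := ht
    refine Submodule.subset_span ⟨equivFunOnFinite.symm ![t.1, t.2.1, t.2.2], ?_, ?_⟩
    · simpa [degree_eq_sum, Fin.sum_univ_three] using hdeg
    · show normalForm K a c α (monomial _ 1) = _
      rw [normalForm_monomial, reduce_of_lt_three α t hr, standardPart, if_pos h]

theorem card_standardOfDegree (m : ℕ) :
    (standardOfDegree a c α m).card = ∑ r ∈ range 3,
      (min (xBound a α r) (m + 1 - r) - (m + 1 - r - zBound c α r)) := by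
  have eq_biUnion : standardOfDegree a c α m = (range 3).biUnion fun r =>
      (Ico (m + 1 - r - zBound c α r) (min (xBound a α r) (m + 1 - r))).image
        fun p => (p, r, m - r - p) := by
    ext ⟨p, r, q⟩
    rw [standardOfDegree, Finset.mem_filter]
    simp only [IsStandard, Finset.mem_product, mem_range, mem_biUnion, mem_image, mem_Ico,
      Prod.mk.injEq]
    constructor
    · rintro ⟨⟨-, hr, -⟩, ⟨hp, hq⟩, hdeg⟩
      exact ⟨r, hr, p, ⟨by omega, by omega⟩, rfl, rfl, by omega⟩
    · rintro ⟨r, hr, p, ⟨h₁, h₂⟩, rfl, rfl, rfl⟩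
      exact ⟨⟨by omega, hr, by omega⟩, ⟨by omega, by omega⟩, by omega⟩
  rw [eq_biUnion, card_biUnion]
  · refine sum_congr rfl fun r _ => ?_
    rw [card_image_of_injective _ fun p p' h => (Prod.mk.inj h).1, Nat.card_Ico]
  · intro r _ r' _ hne
    simp only [Function.onFun, disjoint_left, mem_image]
    rintro _ ⟨p, -, rfl⟩ ⟨p', -, h⟩
    exact hne (congrArg (·.2.1) h).symm

theorem hilb_span_gens (hα : α ≤ 3) (m : ℕ) :
    hilb K (Ideal.span (gens K a c α)) m = ∑ r ∈ range 3,
      (min (xBound a α r) (m + 1 - r) - (m + 1 - r - zBound c α r)) := by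
  rw [hilb_eq_finrank_map_of_ker_eq (ker_normalForm K a c α hα),
    map_homogeneousSubmodule_normalForm K a c α hα, finrank_span_image_single_one,
    card_standardOfDegree]

end I1

theorem stmt_10_general (K : Type*) [Field K] (a c α : ℕ)
    (hα : α = 1 ∨ α = 2) (hcα : 4 ≤ c + α) :
    let I : Ideal (MvPolynomial (Fin 3) K) := Ideal.span
      {(X 0 : MvPolynomial (Fin 3) K) ^ a, X 1 ^ 3 - X 0 ^ α * X 2 ^ (3 - α), X 2 ^ c,
        X 0 ^ (a - α) * X 1 ^ 2, X 1 ^ 2 * X 2 ^ (c + α - 3)}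
    let k : ℕ := (a + c - 1) / 2
    ((a = c → hilb K I k = 3 * c - 3) ∧
     (c + 1 ≤ a → hilb K I k = 3 * c - 3 + α) ∧
     (c + 3 ≤ a → hilb K I k = hilb K I (k - 1))) := by
  intro I k
  have hilb_I (m : ℕ) : hilb K I m = (min a (m + 1) - (m + 1 - c)) + (min a m - (m - c)) +
      (min (a - α) (m - 1) - (m - 1 - (c + α - 3))) := by
    rw [show I = Ideal.span (I1.gens K a c α) from rfl, I1.hilb_span_gens K a c α (by omega),
      Finset.sum_range_succ, Finset.sum_range_succ, Finset.sum_range_one]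
    simp [I1.xBound, I1.zBound]
  simp only [hilb_I, k]
  refine ⟨fun h => ?_, fun h => ?_, fun h => ?_⟩ <;> rcases hα with rfl | rfl <;> omega

theorem stmt_10 (K : Type*) [Field K] [CharZero K] (a c α : ℕ)
    (hc : 2 ≤ c) (hac : c ≤ a) (hα : α = 1 ∨ α = 2) (hcα : 4 ≤ c + α) :
    let I : Ideal (MvPolynomial (Fin 3) K) := Ideal.span
      {(X 0 : MvPolynomial (Fin 3) K) ^ a, X 1 ^ 3 - X 0 ^ α * X 2 ^ (3 - α), X 2 ^ c,
        X 0 ^ (a - α) * X 1 ^ 2, X 1 ^ 2 * X 2 ^ (c + α - 3)}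
    let k : ℕ := (a + c - 1) / 2
    ((a = c → hilb K I k = 3 * c - 3) ∧
     (c + 1 ≤ a → hilb K I k = 3 * c - 3 + α) ∧
     (c + 3 ≤ a → hilb K I k = hilb K I (k - 1))) :=
  stmt_10_general K a c α hα hcα
end

section
/- Let K be a field of characteristic zero, R = K[x,y,z], and let a, b, α be integers with a ≥ b−1, 1 ≤ α ≤ a−1 and 1 ≤ b−α ≤ 2. Let G = R/(x^a, y^b − x^α z^{b−α}, z^3) and set k = ⌊(a+b)/2⌋. Then h_G(k) = 3b−4 if a = b−1, h_G(k) = 3b−2 if a = b, h_G(k) = 3b−1 if a = b+1, and h_G(k) = 3b if a ≥ b+2. Moreover, if a ≥ b+4, then h_G(k) = h_G(k−1). -/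
/-!
The monomials `x^i y^j z^l` with `i < a`, `j < b`, `l < 3` form a `K`-basis of `G`. They span,
because `y^b` may be rewritten as `x^α z^(b-α)` without changing the degree, lowering the
`y`-exponent. They are linearly independent, because `G` maps to the iterated extension
`K[x]/(x^a) [z]/(z^3) [y]/(y^b - x^α z^(b-α))`, where they become a tower of power bases.
Hence `h_G(k)` is the number of such exponent triples of total degree `k`, namely
`∑_{l<3} (min(b, k+1-l) - (k+1-a-l))` in truncated arithmetic, and the stated values follow by
case analysis at `k = ⌊(a+b)/2⌋`.
-/

open MvPolynomial

def stdExponents (a b c k : ℕ) : Finset (ℕ × ℕ × ℕ) :=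
  (Finset.range a ×ˢ Finset.range b ×ˢ Finset.range c).filter
    fun t => t.1 + t.2.1 + t.2.2 = k

lemma mem_stdExponents {a b c k : ℕ} {t : ℕ × ℕ × ℕ} :
    t ∈ stdExponents a b c k ↔
      (t.1 < a ∧ t.2.1 < b ∧ t.2.2 < c) ∧ t.1 + t.2.1 + t.2.2 = k := by
  simp [stdExponents]

theorem card_stdExponents (a b c k : ℕ) :
    (stdExponents a b c k).card =
      ∑ l ∈ Finset.range c, (min b (k + 1 - l) - (k + 1 - a - l)) := by
  rw [Finset.card_eq_sum_card_fiberwise (f := fun t => t.2.2) (t := Finset.range c)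
    fun t ht => Finset.mem_range.2 (mem_stdExponents.1 ht).1.2.2]
  refine Finset.sum_congr rfl fun l hl => ?_
  rw [Finset.mem_range] at hl
  rw [← Nat.card_Ico]
  -- for fixed `l`, a triple is determined by its middle exponent `j`
  apply Finset.card_nbij' (fun t => t.2.1) (fun j => (k - l - j, j, l))
  · rintro ⟨i, j, l'⟩ ht
    simp only [Finset.mem_coe, Finset.mem_filter, mem_stdExponents] at ht
    simp only [Finset.mem_coe, Finset.mem_Ico, lt_min_iff]
    omega
  · intro j hj
    simp only [Finset.mem_coe, Finset.mem_Ico, lt_min_iff] at hj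
    simp only [Finset.mem_coe, Finset.mem_filter, mem_stdExponents, and_true]
    omega
  · rintro ⟨i, j, l'⟩ ht
    simp only [Finset.mem_coe, Finset.mem_filter, mem_stdExponents] at ht
    simp only [Prod.mk.injEq, true_and]
    omega
  · intro j _
    rfl

section

variable {K : Type*} [Field K]

noncomputable def xyzMonomial (t : ℕ × ℕ × ℕ) : MvPolynomial (Fin 3) K :=
  X 0 ^ t.1 * X 1 ^ t.2.1 * X 2 ^ t.2.2

lemma monomial_one_eq_xyzMonomial (d : Fin 3 →₀ ℕ) :
    monomial d (1 : K) = xyzMonomial (d 0, d 1, d 2) := by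
  rw [monomial_eq, C_1, one_mul, Finsupp.prod_fintype _ _ fun _ => pow_zero _,
    Fin.prod_univ_three, xyzMonomial]

lemma isHomogeneous_xyzMonomial (t : ℕ × ℕ × ℕ) :
    (xyzMonomial t : MvPolynomial (Fin 3) K).IsHomogeneous (t.1 + t.2.1 + t.2.2) := by
  simpa only [xyzMonomial, one_mul] using
    (((isHomogeneous_X K 0).pow t.1).mul ((isHomogeneous_X K 1).pow t.2.1)).mul
      ((isHomogeneous_X K 2).pow t.2.2)

variable (K) in
noncomputable def binomialIdeal (a b c α γ : ℕ) : Ideal (MvPolynomial (Fin 3) K) :=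
  Ideal.span {X 0 ^ a, X 1 ^ b - X 0 ^ α * X 2 ^ γ, X 2 ^ c}

variable {a b c α γ : ℕ}

lemma xyzMonomial_mem_binomialIdeal_of_le_fst {t : ℕ × ℕ × ℕ} (h : a ≤ t.1) :
    xyzMonomial t ∈ binomialIdeal K a b c α γ :=
  Ideal.mem_of_dvd _ (Dvd.dvd.mul_right (Dvd.dvd.mul_right (pow_dvd_pow _ h) _) _)
    (Ideal.subset_span (by simp))

lemma xyzMonomial_mem_binomialIdeal_of_le_snd_snd {t : ℕ × ℕ × ℕ} (h : c ≤ t.2.2) :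
    xyzMonomial t ∈ binomialIdeal K a b c α γ :=
  Ideal.mem_of_dvd _ (Dvd.dvd.mul_left (pow_dvd_pow _ h) _) (Ideal.subset_span (by simp))

lemma mk_xyzMonomial_add_snd (i j l : ℕ) :
    Ideal.Quotient.mk (binomialIdeal K a b c α γ) (xyzMonomial (i, b + j, l)) =
      Ideal.Quotient.mk _ (xyzMonomial (i + α, j, l + γ)) := by
  rw [Ideal.Quotient.mk_eq_mk_iff_sub_mem]
  have hrel : X 1 ^ b - X 0 ^ α * X 2 ^ γ ∈ binomialIdeal K a b c α γ :=
    Ideal.subset_span (by simp)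
  convert Ideal.mul_mem_left _ (xyzMonomial (i, j, l)) hrel using 1
  simp only [xyzMonomial]
  ring

noncomputable def stdMonomials (K : Type*) [Field K] (a b c α γ k : ℕ) :
    stdExponents a b c k → MvPolynomial (Fin 3) K ⧸ binomialIdeal K a b c α γ :=
  fun t => Ideal.Quotient.mk _ (xyzMonomial t.1)

lemma mk_xyzMonomial_mem_span_stdMonomials (hb : 0 < b) (hαγ : α + γ = b) (k : ℕ)
    (t : ℕ × ℕ × ℕ) (ht : t.1 + t.2.1 + t.2.2 = k) :
    Ideal.Quotient.mk _ (xyzMonomial t) ∈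
      Submodule.span K (Set.range (stdMonomials K a b c α γ k)) := by
  obtain ⟨i, j, l⟩ := t
  dsimp only at ht
  induction j using Nat.strong_induction_on generalizing i l with
  | _ j ih =>
    by_cases hi : a ≤ i
    · rw [Ideal.Quotient.eq_zero_iff_mem.2 (xyzMonomial_mem_binomialIdeal_of_le_fst hi)]
      exact Submodule.zero_mem _
    by_cases hl : c ≤ l
    · rw [Ideal.Quotient.eq_zero_iff_mem.2 (xyzMonomial_mem_binomialIdeal_of_le_snd_snd hl)]
      exact Submodule.zero_mem _
    by_cases hj : b ≤ j
    · obtain ⟨j, rfl⟩ := Nat.exists_eq_add_of_le hj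
      rw [mk_xyzMonomial_add_snd]
      exact ih j (by omega) _ _ (by omega)
    exact Submodule.subset_span
      ⟨⟨(i, j, l), mem_stdExponents.2 ⟨by simp only; omega, ht⟩⟩, rfl⟩

lemma grComponent_binomialIdeal (hb : 0 < b) (hαγ : α + γ = b) (k : ℕ) :
    grComponent K (binomialIdeal K a b c α γ) k =
      Submodule.span K (Set.range (stdMonomials K a b c α γ k)) := by
  apply le_antisymm
  · rw [grComponent, homogeneousSubmodule_eq_finsupp_supported, ← restrictSupport,
      restrictSupport_eq_span, Submodule.map_span, Submodule.span_le]
    rintro _ ⟨_, ⟨d, hd, rfl⟩, rfl⟩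
    rw [Set.mem_ofPred_eq, Finsupp.degree_eq_sum, Fin.sum_univ_three] at hd
    simpa [monomial_one_eq_xyzMonomial] using
      mk_xyzMonomial_mem_span_stdMonomials hb hαγ k (d 0, d 1, d 2) hd
  · rw [Submodule.span_le]
    rintro _ ⟨t, rfl⟩
    refine ⟨xyzMonomial t.1, ?_, rfl⟩
    have := isHomogeneous_xyzMonomial (K := K) t.1
    rwa [(mem_stdExponents.1 t.2).2] at this

end

lemma AdjoinRoot.nontrivial_of_monic {R : Type*} [CommRing R] [Nontrivial R]
    {g : Polynomial R} (hg : g.Monic) (h : 0 < g.natDegree) : Nontrivial (AdjoinRoot g) :=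
  nontrivial_of_ne _ _ ((AdjoinRoot.powerBasis' hg).basis.ne_zero ⟨0, h⟩)

lemma AdjoinRoot.root_X_pow_pow {R : Type*} [CommRing R] (n : ℕ) :
    AdjoinRoot.root (Polynomial.X ^ n : Polynomial R) ^ n = 0 := by
  rw [← AdjoinRoot.mk_X, ← map_pow, AdjoinRoot.mk_self]

section Model

variable (K : Type*) [Field K] (a b c α γ : ℕ)

abbrev TruncX : Type _ := AdjoinRoot (Polynomial.X ^ a : Polynomial K)

abbrev TruncXZ : Type _ := AdjoinRoot (Polynomial.X ^ c : Polynomial (TruncX K a))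

-- `K[x]/(x^a) [z]/(z^c) [y]/(y^b - x^α z^γ)`: a model of the quotient by `binomialIdeal` which is
-- visibly free over `K` on the monomials `x^i z^l y^j` with `i < a`, `l < c`, `j < b`.
noncomputable abbrev BinomialModel : Type _ :=
  AdjoinRoot (Polynomial.X ^ b -
    Polynomial.C (algebraMap (TruncX K a) (TruncXZ K a c) (AdjoinRoot.root _) ^ α *
      AdjoinRoot.root _ ^ γ) : Polynomial (TruncXZ K a c))

namespace BinomialModel

noncomputable def x : BinomialModel K a b c α γ :=
  algebraMap (TruncX K a) _ (AdjoinRoot.root _)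

noncomputable def y : BinomialModel K a b c α γ := AdjoinRoot.root _

noncomputable def z : BinomialModel K a b c α γ :=
  algebraMap (TruncXZ K a c) _ (AdjoinRoot.root _)

lemma x_pow : x K a b c α γ ^ a = 0 := by
  rw [x, ← map_pow, AdjoinRoot.root_X_pow_pow, map_zero]

lemma z_pow : z K a b c α γ ^ c = 0 := by
  rw [z, ← map_pow, AdjoinRoot.root_X_pow_pow, map_zero]

lemma y_pow : y K a b c α γ ^ b = x K a b c α γ ^ α * z K a b c α γ ^ γ := by
  have h := AdjoinRoot.mk_self (f := (Polynomial.X ^ b -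
    Polynomial.C (algebraMap (TruncX K a) (TruncXZ K a c) (AdjoinRoot.root _) ^ α *
      AdjoinRoot.root _ ^ γ) : Polynomial (TruncXZ K a c)))
  rw [map_sub, map_pow, AdjoinRoot.mk_X, AdjoinRoot.mk_C, sub_eq_zero] at h
  rw [y, h, x, z, ← AdjoinRoot.algebraMap_eq, map_mul, map_pow, map_pow,
    ← IsScalarTower.algebraMap_apply]

noncomputable def basis (ha : 0 < a) (hb : 0 < b) (hc : 0 < c) :
    Module.Basis ((Fin a × Fin c) × Fin b) K (BinomialModel K a b c α γ) :=
  have hXa : (Polynomial.X ^ a : Polynomial K).natDegree = a := Polynomial.natDegree_X_pow a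
  haveI : Nontrivial (TruncX K a) :=
    AdjoinRoot.nontrivial_of_monic (Polynomial.monic_X_pow a) (by rwa [hXa])
  have hXc : (Polynomial.X ^ c : Polynomial (TruncX K a)).natDegree = c :=
    Polynomial.natDegree_X_pow c
  haveI : Nontrivial (TruncXZ K a c) :=
    AdjoinRoot.nontrivial_of_monic (Polynomial.monic_X_pow c) (by rwa [hXc])
  (((AdjoinRoot.powerBasis' (Polynomial.monic_X_pow a)).basis.reindex (finCongr hXa)).smulTower
    ((AdjoinRoot.powerBasis' (Polynomial.monic_X_pow c)).basis.reindex (finCongr hXc))).smulTower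
    ((AdjoinRoot.powerBasis' (Polynomial.monic_X_pow_sub_C _ hb.ne')).basis.reindex
      (finCongr Polynomial.natDegree_X_pow_sub_C))

lemma basis_apply (ha : 0 < a) (hb : 0 < b) (hc : 0 < c) (i : Fin a) (l : Fin c) (j : Fin b) :
    basis K a b c α γ ha hb hc ((i, l), j) =
      x K a b c α γ ^ (i : ℕ) * z K a b c α γ ^ (l : ℕ) * y K a b c α γ ^ (j : ℕ) := by
  simp only [basis, Module.Basis.smulTower_apply, Module.Basis.reindex_apply,
    PowerBasis.basis_eq_pow, AdjoinRoot.powerBasis'_gen, Algebra.smul_def, map_mul, map_pow]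
  simp only [x, y, z, ← IsScalarTower.algebraMap_apply]
  rfl

end BinomialModel

end Model

section

variable {K : Type*} [Field K] {a b c α γ : ℕ}

variable (K a b c α γ) in
noncomputable def toBinomialModel : MvPolynomial (Fin 3) K →ₐ[K] BinomialModel K a b c α γ :=
  aeval ![BinomialModel.x K a b c α γ, BinomialModel.y K a b c α γ,
    BinomialModel.z K a b c α γ]

lemma toBinomialModel_xyzMonomial (t : ℕ × ℕ × ℕ) :
    toBinomialModel K a b c α γ (xyzMonomial t) =
      BinomialModel.x K a b c α γ ^ t.1 * BinomialModel.y K a b c α γ ^ t.2.1 *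
        BinomialModel.z K a b c α γ ^ t.2.2 := by
  simp [toBinomialModel, xyzMonomial]

lemma binomialIdeal_le_ker_toBinomialModel :
    binomialIdeal K a b c α γ ≤ RingHom.ker (toBinomialModel K a b c α γ) := by
  rw [binomialIdeal, Ideal.span_le]
  rintro q (rfl | rfl | rfl) <;>
    simp [toBinomialModel, BinomialModel.x_pow, BinomialModel.y_pow, BinomialModel.z_pow]

lemma linearIndependent_stdMonomials (ha : 0 < a) (hb : 0 < b) (hc : 0 < c) (k : ℕ) :
    LinearIndependent K (stdMonomials K a b c α γ k) := by
  let φ := Ideal.Quotient.liftₐ (binomialIdeal K a b c α γ) (toBinomialModel K a b c α γ)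
    fun _ hp => binomialIdeal_le_ker_toBinomialModel hp
  refine LinearIndependent.of_comp φ.toLinearMap ?_
  have hbound (t : stdExponents a b c k) := (mem_stdExponents.1 t.2).1
  have hφ : φ.toLinearMap ∘ stdMonomials K a b c α γ k =
      BinomialModel.basis K a b c α γ ha hb hc ∘
        fun t => ((⟨t.1.1, (hbound t).1⟩, ⟨t.1.2.2, (hbound t).2.2⟩),
          ⟨t.1.2.1, (hbound t).2.1⟩) := by
    funext t
    rw [Function.comp_apply, Function.comp_apply, BinomialModel.basis_apply, mul_right_comm,
      ← toBinomialModel_xyzMonomial]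
    rfl
  rw [hφ]
  refine (BinomialModel.basis K a b c α γ ha hb hc).linearIndependent.comp _ fun s t hst => ?_
  simp only [Prod.mk.injEq, Fin.mk.injEq] at hst
  exact Subtype.ext (Prod.ext hst.1.1 (Prod.ext hst.2 hst.1.2))

theorem hilb_binomialIdeal (ha : 0 < a) (hb : 0 < b) (hc : 0 < c) (hαγ : α + γ = b) (k : ℕ) :
    hilb K (binomialIdeal K a b c α γ) k = (stdExponents a b c k).card := by
  rw [hilb, grComponent_binomialIdeal hb hαγ,
    finrank_span_eq_card (linearIndependent_stdMonomials ha hb hc k), Fintype.card_coe]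

end

theorem stmt_12_general (K : Type*) [Field K] (a b α : ℕ)
    (hα1 : 1 ≤ α) (hα2 : α ≤ a - 1) (hγ1 : 1 ≤ b - α) :
    let I : Ideal (MvPolynomial (Fin 3) K) := Ideal.span
      {(X 0 : MvPolynomial (Fin 3) K) ^ a, X 1 ^ b - X 0 ^ α * X 2 ^ (b - α), X 2 ^ 3}
    let k : ℕ := (a + b) / 2
    ((a + 1 = b → hilb K I k = 3 * b - 4) ∧
     (a = b → hilb K I k = 3 * b - 2) ∧
     (a = b + 1 → hilb K I k = 3 * b - 1) ∧
     (b + 2 ≤ a → hilb K I k = 3 * b) ∧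
     (b + 4 ≤ a → hilb K I k = hilb K I (k - 1))) := by
  intro I k
  have ha : 0 < a := Nat.lt_of_lt_of_le hα1 (hα2.trans (Nat.sub_le a 1))
  have hilb_eq (n : ℕ) :
      hilb K I n = ∑ l ∈ Finset.range 3, (min b (n + 1 - l) - (n + 1 - a - l)) :=
    (hilb_binomialIdeal ha (by omega) three_pos (by omega) n).trans
      (card_stdExponents a b 3 n)
  simp only [hilb_eq, Finset.sum_range_succ, Finset.sum_range_zero, k]
  omega

theorem stmt_12 (K : Type*) [Field K] [CharZero K] (a b α : ℕ)
    (hab : b ≤ a + 1) (hα1 : 1 ≤ α) (hα2 : α ≤ a - 1)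
    (hγ1 : 1 ≤ b - α) (hγ2 : b - α ≤ 2) :
    let I : Ideal (MvPolynomial (Fin 3) K) := Ideal.span
      {(X 0 : MvPolynomial (Fin 3) K) ^ a, X 1 ^ b - X 0 ^ α * X 2 ^ (b - α), X 2 ^ 3}
    let k : ℕ := (a + b) / 2
    ((a + 1 = b → hilb K I k = 3 * b - 4) ∧
     (a = b → hilb K I k = 3 * b - 2) ∧
     (a = b + 1 → hilb K I k = 3 * b - 1) ∧
     (b + 2 ≤ a → hilb K I k = 3 * b) ∧
     (b + 4 ≤ a → hilb K I k = hilb K I (k - 1))) :=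
  stmt_12_general K a b α hα1 hα2 hγ1
end
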